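/- arXiv:1902.03134 — 14 statements merged into one kernel-verified Lean document; each statement's English description precedes it below -/
import Mathlib

section
/- For every m ≥ 1, every m×m real matrix A, and every integer r with 1 ≤ r ≤ m, evaluating Newton polynomials at matrices gives χ_{I+A,r}(I+A) = Σ_{j=0}^{r} C(m−1−r+j, j) · χ_{A,r−j}(A), where χ_{A,0}(A) = I; explicitly, χ_{I+A,r}(I+A) = χ_{A,r}(A) + (m−r)χ_{A,r−1}(A) + ⋯ + C(m−2, r−1)χ_{A,1}(A) + C(m−1, r)·I. -/
/-!
Write `n = m - r` and `p = charpoly A`. Then `χ_{A,r} = (-1)^r · (p div X^n)`, the quotient of `p`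
by `X^n`, and since `charpoly (I + A) = p(X - 1)`, the substitution `X ↦ X + 1` turns
`χ_{I+A,r}` into `(-1)^r · (p div (X + 1)^n)`. Both `p div (X + 1)^n` and
`Σ_j binom(-n, j) · (p div X^(n+j))` equal `p` at `n = 0` and are divided by `X + 1` when `n`
increases by one (the latter by Pascal's rule for `binom(-n, j)`), so they agree: this is the
expansion `(X + 1)^(-n) = Σ_j binom(-n, j) X^(-n-j)`.
-/

/-- The `r`-th elementary invariant of an `m × m` real matrix `A`:
`ε_r(A) = (−1)^r · (coefficient of X^(m−r) in det(X·I − A))`. -/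
noncomputable def elemInv (m : ℕ) (A : Matrix (Fin m) (Fin m) ℝ) (r : ℕ) : ℝ :=
  (-1 : ℝ) ^ r * (Matrix.charpoly A).coeff (m - r)

/-- The `r`-th Newton polynomial of `A`, `χ_{A,r}(X) = Σ_{k=0}^{r} (−1)^k ε_{r−k}(A) X^k`,
evaluated at the matrix `B`. -/
noncomputable def newtonEval (m : ℕ) (A B : Matrix (Fin m) (Fin m) ℝ) (r : ℕ) :
    Matrix (Fin m) (Fin m) ℝ :=
  ∑ k ∈ Finset.range (r + 1), ((-1 : ℝ) ^ k * elemInv m A (r - k)) • B ^ k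

open Polynomial Finset

namespace Polynomial

variable {R : Type*} [CommRing R]

theorem coeff_divX_iterate (p : R[X]) (n k : ℕ) : (divX^[n] p).coeff k = p.coeff (k + n) := by
  induction n generalizing p with
  | zero => rfl
  | succ n ih => rw [Function.iterate_succ_apply, ih, coeff_divX]; congr 1

theorem natDegree_divX_iterate (p : R[X]) (n : ℕ) :
    (divX^[n] p).natDegree = p.natDegree - n := by
  induction n with
  | zero => rfl
  | succ n ih =>
    rw [Function.iterate_succ_apply', natDegree_divX_eq_natDegree_tsub_one, ih]
    omega

theorem X_add_one_mul_divX_iterate_succ (p : R[X]) (k : ℕ) :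
    (X + 1) * divX^[k + 1] p = divX^[k] p + divX^[k + 1] p - C (p.coeff k) := by
  have h := X_mul_divX_add (divX^[k] p)
  rw [coeff_divX_iterate, zero_add] at h
  rw [Function.iterate_succ_apply']
  linear_combination h

theorem divByMonic_X_add_C_eq_of_eq_mul_add {f g : R[X]} (r c : R)
    (h : f = (X + C r) * g + C c) : f /ₘ (X + C r) = g := by
  nontriviality R
  refine (div_modByMonic_unique g (C c) (monic_X_add_C r) ⟨by rw [h, add_comm], ?_⟩).1
  rw [degree_X_add_C]
  exact degree_C_le.trans_lt (by norm_num)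

theorem taylor_divX (r : R) (f : R[X]) : taylor r (divX f) = taylor r f /ₘ (X + C r) := by
  refine (divByMonic_X_add_C_eq_of_eq_mul_add r (f.coeff 0) ?_).symm
  conv_lhs => rw [← X_mul_divX_add f]
  rw [map_add, taylor_mul, taylor_X, taylor_C]

theorem taylor_divX_iterate (r : R) (f : R[X]) (n : ℕ) :
    taylor r (divX^[n] f) = (· /ₘ (X + C r))^[n] (taylor r f) :=
  Function.Semiconj.iterate_right (f := taylor r) (fun g => taylor_divX r g) n f

theorem aeval_taylor {S : Type*} [Semiring S] [Algebra R S] (x : S) (r : R) (f : R[X]) :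
    aeval x (taylor r f) = aeval (x + algebraMap R S r) f := by
  rw [taylor_apply, aeval_comp, map_add, aeval_X, aeval_C]

theorem iterate_divByMonic_X_add_one (p : R[X]) (n N : ℕ) (hp : p.natDegree ≤ n + N) :
    (· /ₘ (X + 1))^[n] p =
      ∑ j ∈ range (N + 1), Ring.choose (-(n : ℤ)) j • divX^[n + j] p := by
  induction n generalizing N with
  | zero => simp [sum_range_succ']
  | succ n ih =>
    set b : ℕ → ℤ := fun j => Ring.choose (-(n + 1 : ℕ) : ℤ) j
    have pascal (j : ℕ) : Ring.choose (-(n : ℤ)) (j + 1) = b j + b (j + 1) := by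
      simp only [b, ← Ring.choose_succ_succ]
      push_cast
      ring_nf
    have top_const : divX^[n + (N + 1)] p = C (p.coeff (n + (N + 1))) := by
      rw [eq_C_of_natDegree_eq_zero (p := divX^[n + (N + 1)] p)
        (by rw [natDegree_divX_iterate]; omega), coeff_divX_iterate, zero_add]
    have X_add_one_mul : (X + C 1) * ∑ j ∈ range (N + 1), b j • divX^[n + 1 + j] p
        = ∑ j ∈ range (N + 1), b j • divX^[n + j] p
          + ∑ j ∈ range (N + 1), b j • divX^[n + j + 1] p
          - C (∑ j ∈ range (N + 1), b j • p.coeff (n + j)) := by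
      simp_rw [C_1, mul_sum, mul_smul_comm, add_right_comm n 1, X_add_one_mul_divX_iterate_succ,
        smul_sub, smul_add, sum_sub_distrib, sum_add_distrib, map_sum, map_zsmul]
    have sum_pascal : ∑ j ∈ range (N + 1 + 1), Ring.choose (-(n : ℤ)) j • divX^[n + j] p
        = ∑ j ∈ range (N + 1 + 1), b j • divX^[n + j] p
          + ∑ j ∈ range (N + 1), b j • divX^[n + j + 1] p := by
      rw [sum_range_succ' (fun j => Ring.choose (-(n : ℤ)) j • divX^[n + j] p),
        sum_range_succ' (fun j => b j • divX^[n + j] p)]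
      simp only [pascal, add_smul, sum_add_distrib, b, Ring.choose_zero_right, ← add_assoc]
      abel
    rw [Function.iterate_succ_apply', ih (N + 1) (by omega)]
    refine divByMonic_X_add_C_eq_of_eq_mul_add 1
      (∑ j ∈ range (N + 1), b j • p.coeff (n + j) + b (N + 1) • p.coeff (n + (N + 1))) ?_
    rw [sum_pascal, sum_range_succ (fun j => b j • divX^[n + j] p), top_const, X_add_one_mul,
      C_add, map_zsmul]
    abel

end Polynomial

theorem Matrix.charpoly_one_add {n R : Type*} [Fintype n] [DecidableEq n] [CommRing R]
    (A : Matrix n n R) : (1 + A).charpoly = taylor (-1) A.charpoly := by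
  rw [taylor_apply, ← Matrix.charpoly_sub_scalar, map_neg, map_one, sub_neg_eq_add, add_comm]

-- `n + j - 1` truncates only at `n = j = 0`, where both sides are `1`.
theorem Ring.choose_neg_natCast (n j : ℕ) :
    Ring.choose (-(n : ℤ)) j = (-1) ^ j * ((n + j - 1).choose j : ℤ) := by
  rw [Ring.choose_neg]
  rcases Nat.eq_zero_or_pos (n + j) with h | h
  · obtain ⟨rfl, rfl⟩ : n = 0 ∧ j = 0 := by omega
    simp
  · rw [show (n : ℤ) + j - 1 = ((n + j - 1 : ℕ) : ℤ) by omega, Ring.choose_natCast,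
      Units.smul_def, Int.coe_negOnePow_natCast, smul_eq_mul]

theorem newtonEval_eq_smul_aeval_divX_iterate {m r : ℕ} (hrm : r ≤ m)
    (A B : Matrix (Fin m) (Fin m) ℝ) :
    newtonEval m A B r = (-1 : ℝ) ^ r • aeval B (divX^[m - r] A.charpoly) := by
  have hdeg : (divX^[m - r] A.charpoly).natDegree < r + 1 := by
    rw [natDegree_divX_iterate, Matrix.charpoly_natDegree_eq_dim, Fintype.card_fin]
    omega
  rw [newtonEval, aeval_eq_sum_range' hdeg, smul_sum]
  refine sum_congr rfl fun k hk => ?_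
  have hkr : k ≤ r := Nat.lt_succ_iff.mp (mem_range.mp hk)
  rw [elemInv, coeff_divX_iterate, smul_smul, ← mul_assoc, ← pow_add, Nat.add_sub_cancel' hkr,
    show m - (r - k) = k + (m - r) by omega]

theorem newtonEval_one_add_general (m : ℕ) (A : Matrix (Fin m) (Fin m) ℝ)
    (r : ℕ) (hrm : r ≤ m) :
    newtonEval m (1 + A) (1 + A) r =
      ∑ j ∈ Finset.range (r + 1),
        ((((m : ℤ) - 1 - r + j).toNat.choose j : ℝ)) • newtonEval m A A (r - j) := by
  have hdeg : A.charpoly.natDegree ≤ (m - r) + r := by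
    rw [Matrix.charpoly_natDegree_eq_dim, Fintype.card_fin]
    omega
  have hA : A + algebraMap ℝ _ 1 = 1 + A := by rw [map_one, add_comm]
  rw [newtonEval_eq_smul_aeval_divX_iterate hrm, Matrix.charpoly_one_add, ← hA, ← aeval_taylor,
    taylor_divX_iterate, taylor_taylor, add_neg_cancel, taylor_zero, C_1,
    iterate_divByMonic_X_add_one _ _ _ hdeg, map_sum, smul_sum]
  refine sum_congr rfl fun j hj => ?_
  have hjr : j ≤ r := Nat.lt_succ_iff.mp (mem_range.mp hj)
  rw [newtonEval_eq_smul_aeval_divX_iterate (by omega), show m - (r - j) = m - r + j by omega,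
    map_zsmul, Ring.choose_neg_natCast, smul_smul, ← Int.cast_smul_eq_zsmul ℝ, smul_smul,
    show ((m : ℤ) - 1 - r + j).toNat = m - r + j - 1 by omega]
  congr 1
  nth_rw 1 [← Nat.sub_add_cancel hjr]
  push_cast
  have hsq : (-1 : ℝ) ^ j * (-1) ^ j = 1 := by rw [← mul_pow]; norm_num
  linear_combination (((m - r + j - 1).choose j : ℝ) * (-1) ^ (r - j)) * hsq

/-- `χ_{I+A,r}(I+A) = Σ_{j=0}^{r} C(m−1−r+j, j) · χ_{A,r−j}(A)`. -/
theorem newtonEval_one_add (m : ℕ) (hm : 1 ≤ m) (A : Matrix (Fin m) (Fin m) ℝ)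
    (r : ℕ) (hr1 : 1 ≤ r) (hrm : r ≤ m) :
    newtonEval m (1 + A) (1 + A) r =
      ∑ j ∈ Finset.range (r + 1),
        ((((m : ℤ) - 1 - r + j).toNat.choose j : ℝ)) • newtonEval m A A (r - j) :=
  newtonEval_one_add_general m A r hrm
end

section
/- For every m ≥ 1, every m×m real matrix A, and every integer r with 1 ≤ r ≤ m, one has trace(A · χ_{A,r−1}(A)) = r · ε_r(A). -/
open Polynomial Finset

theorem Multiset.succ_mul_esymm_eq_sum {R : Type*} [CommRing R] (s : Multiset R) (r : ℕ) :
    (r + 1) * s.esymm (r + 1) =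
      ∑ k ∈ Finset.range (r + 1), (-1) ^ k * s.esymm (r - k) * (s.map (· ^ (k + 1))).sum := by
  classical
  have psum_eq (j : ℕ) : ∑ x : s, (x : R) ^ j = (s.map (· ^ j)).sum :=
    congrArg Multiset.sum (Multiset.map_univ s (· ^ j))
  have newton := congrArg (MvPolynomial.aeval (fun x : s => (x : R)))
    (MvPolynomial.mul_esymm_eq_sum s R (r + 1))
  simp only [Nat.cast_succ, map_mul, map_pow, map_neg, map_one, _root_.map_add, map_natCast,
    map_sum, MvPolynomial.psum, MvPolynomial.aeval_esymm_eq_multiset_esymm, MvPolynomial.aeval_X,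
    map_univ_coe, psum_eq] at newton
  rw [newton, sum_filter, Nat.sum_antidiagonal_eq_sum_range_succ_mk, sum_range_succ,
    if_neg (lt_irrefl _), add_zero, ← sum_range_reflect, mul_sum]
  refine sum_congr rfl fun k hk => ?_
  have hkr : k ≤ r := mem_range_succ_iff.mp hk
  have sign : (-1 : R) ^ (r + 1 + 1) * (-1) ^ (r - k) = (-1) ^ k := by
    rw [← pow_add, (by omega : r + 1 + 1 + (r - k) = 2 * (r + 1 - k) + k), pow_add, pow_mul,
      neg_one_sq, one_pow, one_mul]
  rw [if_pos (by omega), Nat.add_sub_cancel, (by omega : r + 1 - (r - k) = k + 1), ← mul_assoc,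
    ← mul_assoc, sign]

theorem LinearMap.trace_pow_of_isNilpotent_sub_algebraMap {R M : Type*} [CommRing R]
    [IsReduced R] [AddCommGroup M] [Module R M] [Module.Free R M] [Module.Finite R M]
    {f : Module.End R M} {μ : R} (hf : IsNilpotent (f - algebraMap R _ μ)) (k : ℕ) :
    trace R M (f ^ k) = Module.finrank R M * μ ^ k := by
  induction k with
  | zero => simp
  | succ k ih =>
    rw [pow_succ, Module.End.mul_eq_comp,
      trace_comp_eq_mul_of_commute_of_isNilpotent μ (Commute.self_pow f k).symm hf, ih]
    ring

section AlgClosed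

variable {K : Type*} [Field K] [IsAlgClosed K]

theorem Module.End.trace_pow_eq_sum_roots_charpoly {V : Type*} [AddCommGroup V] [Module K V]
    [FiniteDimensional K V] (f : Module.End K V) (k : ℕ) :
    LinearMap.trace K V (f ^ k) = (f.charpoly.roots.map (· ^ k)).sum := by
  classical
  have hds := DirectSum.isInternal_submodule_of_iSupIndep_of_iSup_eq_top
    f.independent_maxGenEigenspace f.iSup_maxGenEigenspace_eq_top
  have hfin : {μ | f.maxGenEigenspace μ ≠ ⊥}.Finite :=
    WellFoundedGT.finite_ne_bot_of_iSupIndep f.independent_maxGenEigenspace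
  have hmaps (μ : K) := f.mapsTo_maxGenEigenspace_of_comm rfl μ
  have hmaps_pow (μ : K) := f.mapsTo_maxGenEigenspace_of_comm (Commute.self_pow f k) μ
  have htrace (μ : K) : LinearMap.trace K _ ((f ^ k).restrict (hmaps_pow μ)) =
      f.charpoly.rootMultiplicity μ * μ ^ k := by
    have hnil : IsNilpotent (f.restrict (hmaps μ) - algebraMap K _ μ) := by
      convert f.isNilpotent_restrict_maxGenEigenspace_sub_algebraMap μ using 1
      exact LinearMap.ext fun _ => rfl
    rw [← Module.End.pow_restrict k (hmaps μ),
      LinearMap.trace_pow_of_isNilpotent_sub_algebraMap hnil, LinearMap.finrank_maxGenEigenspace_eq]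
  have hsupp : hfin.toFinset = f.charpoly.roots.toFinset := by
    ext μ
    rw [Set.Finite.mem_toFinset, Set.mem_ofPred_eq, Multiset.mem_toFinset,
      mem_roots f.charpoly_monic.ne_zero, ← rootMultiplicity_pos f.charpoly_monic.ne_zero,
      ← LinearMap.finrank_maxGenEigenspace_eq, Module.finrank_pos_iff,
      Submodule.nontrivial_iff_ne_bot]
  rw [LinearMap.trace_eq_sum_trace_restrict' hds hfin hmaps_pow, Finset.sum_multiset_map_count]
  simp only [htrace, hsupp, count_roots, nsmul_eq_mul]

variable {n : Type*} [Fintype n] [DecidableEq n]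

theorem Matrix.trace_pow_eq_sum_roots_charpoly (A : Matrix n n K) (k : ℕ) :
    (A ^ k).trace = (A.charpoly.roots.map (· ^ k)).sum := by
  rw [← Matrix.trace_toLin'_eq, Matrix.toLin'_pow, Module.End.trace_pow_eq_sum_roots_charpoly,
    Matrix.charpoly_toLin']

theorem Matrix.esymm_roots_charpoly (A : Matrix n n K) {j : ℕ} (hj : j ≤ Fintype.card n) :
    A.charpoly.roots.esymm j = (-1) ^ j * A.charpoly.coeff (Fintype.card n - j) := by
  rw [coeff_eq_esymm_roots_of_card (splits_iff_card_roots.mp (IsAlgClosed.splits _))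
    (by rw [charpoly_natDegree_eq_dim]; omega), charpoly_monic A |>.leadingCoeff,
    charpoly_natDegree_eq_dim, Nat.sub_sub_self hj, one_mul, ← mul_assoc, ← pow_add,
    Even.neg_one_pow ⟨j, rfl⟩, one_mul]

end AlgClosed

theorem elemInv_eq_esymm_roots {m : ℕ} (A : Matrix (Fin m) (Fin m) ℝ) {j : ℕ} (hj : j ≤ m) :
    (elemInv m A j : ℂ) = (A.map Complex.ofRealHom).charpoly.roots.esymm j := by
  rw [Matrix.esymm_roots_charpoly _ (by simpa using hj), Matrix.charpoly_map, coeff_map,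
    Fintype.card_fin, elemInv]
  push_cast
  rfl

theorem trace_pow_eq_sum_roots_charpoly_map {m : ℕ} (A : Matrix (Fin m) (Fin m) ℝ) (k : ℕ) :
    ((A ^ k).trace : ℂ) = ((A.map Complex.ofRealHom).charpoly.roots.map (· ^ k)).sum := by
  rw [← Matrix.trace_pow_eq_sum_roots_charpoly, ← RingHom.mapMatrix_apply, ← map_pow,
    RingHom.mapMatrix_apply, ← AddMonoidHom.map_trace]
  rfl

theorem trace_mul_newtonEval_eq_sum (m : ℕ) (A : Matrix (Fin m) (Fin m) ℝ) (r : ℕ) :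
    (A * newtonEval m A A r).trace =
      ∑ k ∈ range (r + 1), (-1) ^ k * elemInv m A (r - k) * (A ^ (k + 1)).trace := by
  simp only [newtonEval, Matrix.mul_sum, Matrix.mul_smul, Matrix.trace_sum, Matrix.trace_smul,
    smul_eq_mul, ← pow_succ', mul_assoc]

theorem trace_mul_newtonEval_general (m : ℕ) (A : Matrix (Fin m) (Fin m) ℝ)
    (r : ℕ) (hr1 : 1 ≤ r) (hrm : r ≤ m) :
    Matrix.trace (A * newtonEval m A A (r - 1)) = (r : ℝ) * elemInv m A r := by
  obtain ⟨r, rfl⟩ := Nat.exists_eq_add_of_le' hr1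
  apply Complex.ofReal_injective
  rw [Nat.add_sub_cancel, trace_mul_newtonEval_eq_sum]
  push_cast
  rw [elemInv_eq_esymm_roots A hrm, Multiset.succ_mul_esymm_eq_sum]
  refine sum_congr rfl fun k _ => ?_
  rw [elemInv_eq_esymm_roots A (by omega), trace_pow_eq_sum_roots_charpoly_map]

/-- `trace(A · χ_{A,r−1}(A)) = r · ε_r(A)` (the Newton–Girard identity). -/
theorem trace_mul_newtonEval (m : ℕ) (hm : 1 ≤ m) (A : Matrix (Fin m) (Fin m) ℝ)
    (r : ℕ) (hr1 : 1 ≤ r) (hrm : r ≤ m) :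
    Matrix.trace (A * newtonEval m A A (r - 1)) = (r : ℝ) * elemInv m A r :=
  trace_mul_newtonEval_general m A r hr1 hrm
end

section
/- Let m ≥ 1, let α : ℝ → M_m(ℝ) be a one-parameter family of m×m real matrices, and suppose that at a point t ∈ ℝ the map α has derivative β (i.e. HasDerivAt α β t). Then for every integer r with 1 ≤ r ≤ m, the real-valued function t ↦ ε_r(α(t)) has derivative trace(β · χ_{α(t), r−1}(α(t))) at t. -/
-- Equip the matrix space with its standard (finite-dimensional) normed structure.
attribute [local instance] Matrix.normedAddCommGroup Matrix.normedSpace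

/-!
Jacobi's formula gives `d/dt det (x - α t) = -tr (β · adj (x - α t))` for every scalar `x`, and
the adjugate of the characteristic matrix expands in the Newton polynomials as
`adj (X - A) = Σ_{k<m} (-1)^k X^(m-1-k) χ_{A,k}(A)`: multiplying by `X - A` telescopes, through
`χ_{A,k+1}(A) = ε_{k+1} - A χ_{A,k}(A)` and Cayley–Hamilton `χ_{A,m}(A) = 0`, to the
characteristic polynomial. By Lagrange interpolation the coefficients of a polynomial of bounded
degree are fixed linear combinations of its values at finitely many points, so they can be
differentiated through the values; the coefficient of `X^(m-r)` is `±ε_r`.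
-/

open Matrix Polynomial

theorem Matrix.sum_det_updateRow {R n : Type*} [CommRing R] [Fintype n] [DecidableEq n]
    (A B : Matrix n n R) :
    ∑ i, (A.updateRow i (B i)).det = trace (B * adjugate A) := by
  simp only [← cramer_transpose_apply, cramer_eq_adjugate_mulVec, ← adjugate_transpose,
    trace, diag, mulVec, dotProduct, mul_apply, transpose_apply, mul_comm]

theorem Matrix.charmatrix_map_eval {R n : Type*} [CommRing R] [Fintype n] [DecidableEq n]
    (A : Matrix n n R) (x : R) :
    (charmatrix A).map (eval x) = scalar n x - A := by
  ext i j
  obtain rfl | hij := eq_or_ne i j <;> simp [*]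

theorem Matrix.eval_trace_mul_adjugate_charmatrix {R n : Type*} [CommRing R] [Fintype n]
    [DecidableEq n] (A B : Matrix n n R) (x : R) :
    (trace (B.map C * adjugate (charmatrix A))).eval x = trace (B * adjugate (scalar n x - A)) := by
  rw [← coe_evalRingHom, AddMonoidHom.map_trace, ← RingHom.mapMatrix_apply, RingHom.map_mul,
    RingHom.map_adjugate, RingHom.mapMatrix_apply, RingHom.mapMatrix_apply, coe_evalRingHom,
    charmatrix_map_eval]
  congr
  ext i j
  simp

theorem Lagrange.coeff_eq_sum_eval_mul_coeff_basis {F ι : Type*} [Field F] [DecidableEq ι]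
    {s : Finset ι} {v : ι → F} (hv : Set.InjOn v s) {p : F[X]} (hp : p.degree < s.card)
    (k : ℕ) :
    p.coeff k = ∑ i ∈ s, p.eval (v i) * (Lagrange.basis s v i).coeff k := by
  conv_lhs => rw [Lagrange.eq_interpolate hv hp, Lagrange.interpolate_apply, finsetSum_coeff]
  simp only [coeff_C_mul]

section Derivatives
variable {𝕜 n : Type*} [NontriviallyNormedField 𝕜] [Fintype n] [DecidableEq n] {t : 𝕜}
  {α : 𝕜 → Matrix n n 𝕜} {β : Matrix n n 𝕜}

theorem HasDerivAt.matrix_det (h : HasDerivAt α β t) :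
    HasDerivAt (fun s => (α s).det) (trace (β * adjugate (α t))) t := by
  let det : ContinuousMultilinearMap 𝕜 (fun _ : n => n → 𝕜) 𝕜 :=
    { toMultilinearMap := (detRowAlternating : (n → 𝕜) [⋀^n]→ₗ[𝕜] 𝕜).toMultilinearMap
      cont := continuous_id.matrix_det }
  rw [← sum_det_updateRow]
  exact ((det.hasFDerivAt (α t)).comp_hasDerivAt t h).congr_deriv (det.linearDeriv_apply _ _)

theorem HasDerivAt.matrix_charpoly_eval (h : HasDerivAt α β t) (x : 𝕜) :
    HasDerivAt (fun s => (α s).charpoly.eval x)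
      ((-trace (β.map C * adjugate (charmatrix (α t)))).eval x) t := by
  simp only [eval_charpoly, eval_neg, eval_trace_mul_adjugate_charmatrix]
  simpa only [neg_mul, trace_neg] using (h.const_sub (scalar n x)).matrix_det

theorem Polynomial.hasDerivAt_coeff_of_hasDerivAt_eval {d : ℕ} {p : 𝕜 → 𝕜[X]} {q : 𝕜[X]}
    (hp : ∀ s, (p s).natDegree ≤ d) (hq : q.natDegree ≤ d)
    (h : ∀ x, HasDerivAt (fun s => (p s).eval x) (q.eval x) t) (k : ℕ) :
    HasDerivAt (fun s => (p s).coeff k) (q.coeff k) t := by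
  classical
  let v := Infinite.natEmbedding 𝕜
  have hv : Set.InjOn v (Finset.range (d + 1)) := v.injective.injOn
  have hdeg {f : 𝕜[X]} (hf : f.natDegree ≤ d) : f.degree < (Finset.range (d + 1)).card := by
    rw [Finset.card_range]
    exact (degree_le_of_natDegree_le hf).trans_lt (WithBot.coe_lt_coe.mpr d.lt_succ_self)
  simp only [Lagrange.coeff_eq_sum_eval_mul_coeff_basis hv (hdeg (hp _)),
    Lagrange.coeff_eq_sum_eval_mul_coeff_basis hv (hdeg hq)]
  exact HasDerivAt.fun_sum fun i _ => (h (v i)).mul_const _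

end Derivatives

section Newton
variable {m : ℕ} (A : Matrix (Fin m) (Fin m) ℝ)

theorem neg_one_pow_mul_elemInv (k : ℕ) :
    (-1 : ℝ) ^ k * elemInv m A k = A.charpoly.coeff (m - k) := by
  rw [elemInv, ← mul_assoc, ← mul_pow, neg_one_mul, neg_neg, one_pow, one_mul]

theorem elemInv_zero : elemInv m A 0 = 1 := by
  simpa [elemInv] using A.charpoly_monic.coeff_natDegree

theorem newtonEval_zero : newtonEval m A A 0 = 1 := by
  simp [newtonEval, elemInv_zero]

theorem newtonEval_succ (k : ℕ) :
    newtonEval m A A (k + 1) = elemInv m A (k + 1) • 1 - A * newtonEval m A A k := by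
  rw [newtonEval, Finset.sum_range_succ', newtonEval, Finset.mul_sum, sub_eq_add_neg,
    ← Finset.sum_neg_distrib, add_comm]
  congr 1
  · simp
  · refine Finset.sum_congr rfl fun i _ => ?_
    rw [Nat.add_sub_add_right, mul_smul_comm, ← pow_succ', pow_succ, ← neg_smul]
    ring_nf

theorem newtonEval_dim : newtonEval m A A m = 0 := by
  have hcoeff : ∀ k ∈ Finset.range (m + 1),
      ((-1 : ℝ) ^ k * elemInv m A (m - k)) • A ^ k
        = (-1 : ℝ) ^ m • (A.charpoly.coeff k • A ^ k) := by
    intro k hk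
    have hkm : k ≤ m := Nat.lt_succ_iff.mp (Finset.mem_range.mp hk)
    rw [elemInv, Nat.sub_sub_self hkm, ← mul_assoc, ← pow_add, Nat.add_sub_cancel' hkm, smul_smul]
  rw [newtonEval, Finset.sum_congr rfl hcoeff, ← Finset.smul_sum,
    ← aeval_eq_sum_range' (by simp), aeval_self_charpoly, smul_zero]

theorem charpoly_eq_sum_elemInv :
    A.charpoly = ∑ k ∈ Finset.range (m + 1), C ((-1 : ℝ) ^ k * elemInv m A k) * X ^ (m - k) := by
  conv_lhs => rw [as_sum_range_C_mul_X_pow A.charpoly, charpoly_natDegree_eq_dim,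
    Fintype.card_fin, ← Finset.sum_range_reflect]
  refine Finset.sum_congr rfl fun k _ => ?_
  rw [neg_one_pow_mul_elemInv, Nat.add_sub_cancel]

theorem charmatrix_mul_sum_newtonEval :
    charmatrix A * ∑ k ∈ Finset.range m,
        ((-1 : ℝ[X]) ^ k * X ^ (m - 1 - k)) • (newtonEval m A A k).map C
      = A.charpoly • 1 := by
  set g : ℕ → Matrix (Fin m) (Fin m) ℝ[X] :=
    fun k => ((-1 : ℝ[X]) ^ k * X ^ (m - k)) • (newtonEval m A A k).map C with hg
  have hterm : ∀ k ∈ Finset.range m,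
      charmatrix A * (((-1 : ℝ[X]) ^ k * X ^ (m - 1 - k)) • (newtonEval m A A k).map C)
        = g k - g (k + 1)
          + (C ((-1 : ℝ) ^ (k + 1) * elemInv m A (k + 1)) * X ^ (m - (k + 1))) • 1 := by
    intro k hk
    have hkm : k < m := Finset.mem_range.mp hk
    have hX : (X : ℝ[X]) ^ (m - k) = X ^ (m - 1 - k) * X := by
      rw [← pow_succ]; congr 1; omega
    have hA : A.map C * (newtonEval m A A k).map C
        = C (elemInv m A (k + 1)) • 1 - (newtonEval m A A (k + 1)).map C := by
      have hAN : A * newtonEval m A A k = elemInv m A (k + 1) • 1 - newtonEval m A A (k + 1) := by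
        rw [newtonEval_succ]; abel
      rw [← Matrix.map_mul, hAN]
      ext i j
      simp [one_apply, apply_ite C]
    rw [hg]
    simp only [charmatrix, scalar_apply, RingHom.mapMatrix_apply, ← smul_one_eq_diagonal, sub_mul,
      smul_mul, one_mul, Matrix.mul_smul, hA, hX, show m - (k + 1) = m - 1 - k by omega, map_mul,
      map_pow, map_neg, map_one]
    module
  rw [Finset.mul_sum, Finset.sum_congr rfl hterm, Finset.sum_add_distrib, Finset.sum_range_sub',
    charpoly_eq_sum_elemInv, Finset.sum_smul, Finset.sum_range_succ' _ m, add_comm]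
  simp [hg, newtonEval_zero, newtonEval_dim, elemInv_zero]

theorem adjugate_charmatrix_eq_sum_newtonEval :
    adjugate (charmatrix A) = ∑ k ∈ Finset.range m,
        ((-1 : ℝ[X]) ^ k * X ^ (m - 1 - k)) • (newtonEval m A A k).map C := by
  have h := congrArg (adjugate (charmatrix A) * ·)
    ((charmatrix_mul_sum_newtonEval A).trans (mul_adjugate (charmatrix A)).symm)
  simp only [← Matrix.mul_assoc, adjugate_mul, smul_mul, Matrix.one_mul] at h
  exact (smul_right_injective _ A.charpoly_monic.ne_zero h).symm

theorem trace_mul_adjugate_charmatrix (B : Matrix (Fin m) (Fin m) ℝ) :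
    trace (B.map C * adjugate (charmatrix A))
      = ∑ k ∈ Finset.range m,
          C ((-1 : ℝ) ^ k * trace (B * newtonEval m A A k)) * X ^ (m - 1 - k) := by
  rw [adjugate_charmatrix_eq_sum_newtonEval, Matrix.mul_sum, trace_sum]
  refine Finset.sum_congr rfl fun k _ => ?_
  rw [Matrix.mul_smul, ← Matrix.map_mul, trace_smul, ← AddMonoidHom.map_trace]
  simp only [map_mul, map_pow, map_neg, map_one, smul_eq_mul]
  ring

theorem natDegree_trace_mul_adjugate_charmatrix_le (B : Matrix (Fin m) (Fin m) ℝ) :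
    (trace (B.map C * adjugate (charmatrix A))).natDegree ≤ m - 1 := by
  rw [trace_mul_adjugate_charmatrix]
  exact natDegree_sum_le_of_forall_le _ _ fun k _ =>
    (natDegree_C_mul_X_pow_le _ _).trans (by omega)

theorem coeff_trace_mul_adjugate_charmatrix (B : Matrix (Fin m) (Fin m) ℝ) {k : ℕ} (hk : k < m) :
    (trace (B.map C * adjugate (charmatrix A))).coeff (m - 1 - k)
      = (-1 : ℝ) ^ k * trace (B * newtonEval m A A k) := by
  rw [trace_mul_adjugate_charmatrix, finsetSum_coeff,
    Finset.sum_eq_single_of_mem k (Finset.mem_range.mpr hk)]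
  · rw [coeff_C_mul_X_pow, if_pos rfl]
  · intro j hj hjk
    rw [coeff_C_mul_X_pow, if_neg]
    have := Finset.mem_range.mp hj
    omega

end Newton

theorem hasDerivAt_elemInv_general (m : ℕ)
    (α : ℝ → Matrix (Fin m) (Fin m) ℝ) (β : Matrix (Fin m) (Fin m) ℝ) (t : ℝ)
    (hα : HasDerivAt α β t) (r : ℕ) (hr1 : 1 ≤ r) (hrm : r ≤ m) :
    HasDerivAt (fun s => elemInv m (α s) r)
      (Matrix.trace (β * newtonEval m (α t) (α t) (r - 1))) t := by
  have hp (s : ℝ) : (α s).charpoly.natDegree ≤ m := by simp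
  have hq : (-trace (β.map C * adjugate (charmatrix (α t)))).natDegree ≤ m := by
    rw [natDegree_neg]
    exact (natDegree_trace_mul_adjugate_charmatrix_le _ _).trans (Nat.sub_le m 1)
  refine ((hasDerivAt_coeff_of_hasDerivAt_eval hp hq hα.matrix_charpoly_eval (m - r)).const_mul
    ((-1 : ℝ) ^ r)).congr_deriv ?_
  obtain ⟨k, rfl⟩ : ∃ k, r = k + 1 := ⟨r - 1, by omega⟩
  rw [show m - (k + 1) = m - 1 - k by omega, coeff_neg,
    coeff_trace_mul_adjugate_charmatrix _ _ (by omega), Nat.add_sub_cancel]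
  linear_combination
    trace (β * newtonEval m (α t) (α t) k) * (even_two_mul k).neg_one_pow (α := ℝ)

/-- If the family `α` of matrices has derivative `β` at `t`, then `t ↦ ε_r(α(t))` has
derivative `trace(β · χ_{α(t),r−1}(α(t)))` at `t`. -/
theorem hasDerivAt_elemInv (m : ℕ) (hm : 1 ≤ m)
    (α : ℝ → Matrix (Fin m) (Fin m) ℝ) (β : Matrix (Fin m) (Fin m) ℝ) (t : ℝ)
    (hα : HasDerivAt α β t) (r : ℕ) (hr1 : 1 ≤ r) (hrm : r ≤ m) :
    HasDerivAt (fun s => elemInv m (α s) r)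
      (Matrix.trace (β * newtonEval m (α t) (α t) (r - 1))) t :=
  hasDerivAt_elemInv_general m α β t hα r hr1 hrm
end

section
/- Let r ≥ 1, m = 2r, and let ρ_1, …, ρ_m be nonnegative real numbers. Then e_r(ρ_1², …, ρ_m²) ≥ C(m, r) · ρ_1ρ_2⋯ρ_m, where e_r is the r-th elementary symmetric polynomial in m variables and C(m,r) is the binomial coefficient. Moreover, equality holds if and only if either all the ρ_i are equal, or at least r+1 of the ρ_i are zero. -/
/-!
Pair each `r`-subset `s` of the `2r` indices with its complement. Since
`(∏ₛ ρ)(∏ₛᶜ ρ) = ∏ ρ`, summing `(∏ₛ ρ - ∏ₛᶜ ρ)²` over all `r`-subsets gives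
`2 e_r(ρ²) - 2 C(2r, r) ∏ ρ`, a sum of squares; this is the inequality, with equality exactly
when `∏ₛ ρ = ∏ₛᶜ ρ` for every `r`-subset `s`.

That balance condition holds when `ρ` is constant, or when `s` and `sᶜ` both always meet the
zero set, i.e. when it has more than `r` elements. Conversely, if at most `r` of the `ρ i`
vanish, some `r`-subset has nonzero product, so its complement does too and no `ρ i` is zero.
For `i ≠ j`, comparing a subset `s ∋ i` avoiding `j` with the subset obtained by exchanging
`i` and `j` then gives `ρ i ^ 2 = ρ j ^ 2`.
-/

open Finset

section

variable {ι M R : Type*} [Fintype ι] [DecidableEq ι] {r : ℕ}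

lemma compl_mem_powersetCard_univ_of_card_eq (hι : Fintype.card ι = 2 * r) {s : Finset ι}
    (hs : s ∈ powersetCard r univ) : sᶜ ∈ powersetCard r univ := by
  rw [mem_powersetCard_univ] at hs ⊢
  rw [card_compl, hι, hs]
  omega

lemma sum_powersetCard_compl_of_card_eq [AddCommMonoid M] (hι : Fintype.card ι = 2 * r)
    (g : Finset ι → M) : ∑ s ∈ powersetCard r univ, g sᶜ = ∑ s ∈ powersetCard r univ, g s :=
  sum_nbij' compl compl (fun _ ↦ compl_mem_powersetCard_univ_of_card_eq hι)
    (fun _ ↦ compl_mem_powersetCard_univ_of_card_eq hι) (fun s _ ↦ compl_compl s)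
    (fun s _ ↦ compl_compl s) fun _ _ ↦ rfl

lemma sum_powersetCard_sq_prod_sub_prod_compl [CommRing R] (hι : Fintype.card ι = 2 * r)
    (f : ι → R) :
    ∑ s ∈ powersetCard r univ, (∏ i ∈ s, f i - ∏ i ∈ sᶜ, f i) ^ 2 =
      2 * (∑ s ∈ powersetCard r univ, ∏ i ∈ s, f i ^ 2 - (2 * r).choose r * ∏ i, f i) := by
  have hexpand (s : Finset ι) : (∏ i ∈ s, f i - ∏ i ∈ sᶜ, f i) ^ 2 =
      ∏ i ∈ s, f i ^ 2 + ∏ i ∈ sᶜ, f i ^ 2 - 2 * ∏ i, f i := by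
    rw [← prod_mul_prod_compl s f, prod_pow, prod_pow]
    ring
  simp only [hexpand, sum_sub_distrib, sum_add_distrib,
    sum_powersetCard_compl_of_card_eq hι fun s ↦ ∏ i ∈ s, f i ^ 2, sum_const,
    card_powersetCard, card_univ, hι, nsmul_eq_mul]
  ring

lemma prod_eq_prod_compl_of_forall_eq [CommMonoid M] (hι : Fintype.card ι = 2 * r)
    {f : ι → M} (hf : ∀ i j, f i = f j) {s : Finset ι} (hs : s ∈ powersetCard r univ) :
    ∏ i ∈ s, f i = ∏ i ∈ sᶜ, f i := by
  rcases isEmpty_or_nonempty ι with hempty | ⟨⟨i₀⟩⟩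
  · simp [Subsingleton.elim s ∅]
  rw [mem_powersetCard_univ] at hs
  rw [prod_eq_pow_card fun i _ ↦ hf i i₀, prod_eq_pow_card fun i _ ↦ hf i i₀, card_compl, hι, hs]
  congr 1
  omega

lemma prod_eq_zero_of_card_compl_lt [CommMonoidWithZero M] [DecidableEq M] {f : ι → M}
    {s : Finset ι} (h : #sᶜ < #{i | f i = 0}) : ∏ i ∈ s, f i = 0 := by
  obtain ⟨z, hz, hzs⟩ := exists_mem_notMem_of_card_lt_card h
  exact prod_eq_zero (by simpa using hzs) (mem_filter.1 hz).2

lemma prod_ne_zero_of_forall_prod_eq_prod_compl [CommMonoidWithZero M] [NoZeroDivisors M]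
    [Nontrivial M] [DecidableEq M] (hι : Fintype.card ι = 2 * r) {f : ι → M}
    (h : ∀ s ∈ powersetCard r univ, ∏ i ∈ s, f i = ∏ i ∈ sᶜ, f i) (hz : #{i | f i = 0} ≤ r) :
    ∏ i, f i ≠ 0 := by
  have hN : r ≤ #{i | ¬f i = 0} := by
    have := card_filter_add_card_filter_not (s := univ) (fun i ↦ f i = 0)
    rw [card_univ, hι] at this
    omega
  obtain ⟨s, hsN, hs⟩ := exists_subset_card_eq hN
  have hs0 : ∏ i ∈ s, f i ≠ 0 := prod_ne_zero_iff.2 fun i hi ↦ (mem_filter.1 (hsN hi)).2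
  rw [← prod_mul_prod_compl s, ← h s (mem_powersetCard_univ.2 hs)]
  exact mul_ne_zero hs0 hs0

lemma exists_mem_powersetCard_mem_notMem (hι : Fintype.card ι = 2 * r) {i j : ι} (hij : i ≠ j) :
    ∃ s ∈ powersetCard r univ, i ∈ s ∧ j ∉ s := by
  have hr : 1 ≤ r := by
    have := card_le_univ {i, j}
    rw [card_pair hij, hι] at this
    omega
  obtain ⟨s, his, hsj, hs⟩ := exists_subsuperset_card_eq (s := {i}) (t := univ.erase j) (n := r)
    (by simpa using hij) (by simpa using hr)
    (by rw [card_erase_of_mem (mem_univ j), card_univ, hι]; omega)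
  exact ⟨s, mem_powersetCard_univ.2 hs, singleton_subset_iff.1 his, fun h ↦ by simpa using hsj h⟩

lemma compl_insert_erase_of_mem_of_notMem {s : Finset ι} {i j : ι} (hi : i ∈ s) (hj : j ∉ s) :
    (insert j (s.erase i))ᶜ = insert i (sᶜ.erase j) := by
  ext k
  simp only [mem_compl, mem_insert, mem_erase]
  grind

lemma sq_eq_sq_of_forall_prod_eq_prod_compl [CommMonoidWithZero M] [IsCancelMulZero M]
    (hι : Fintype.card ι = 2 * r) {f : ι → M}
    (h : ∀ s ∈ powersetCard r univ, ∏ i ∈ s, f i = ∏ i ∈ sᶜ, f i) (hf : ∏ i, f i ≠ 0)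
    (i j : ι) : f i ^ 2 = f j ^ 2 := by
  rcases eq_or_ne i j with rfl | hij
  · rfl
  obtain ⟨s, hs, hi, hj⟩ := exists_mem_powersetCard_mem_notMem hι hij
  have hjA : j ∉ s.erase i := fun h ↦ hj (mem_of_mem_erase h)
  have hiB : i ∉ sᶜ.erase j := fun h ↦ mem_compl.1 (mem_of_mem_erase h) hi
  have hs' : insert j (s.erase i) ∈ powersetCard r univ := by
    rw [mem_powersetCard_univ] at hs ⊢
    rw [card_insert_of_notMem hjA, card_erase_of_mem hi]
    have : 0 < #s := card_pos.2 ⟨i, hi⟩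
    omega
  set A := ∏ k ∈ s.erase i, f k
  set B := ∏ k ∈ sᶜ.erase j, f k
  have hbalance : f i * A = f j * B := by
    rw [mul_prod_erase s f hi, mul_prod_erase sᶜ f (mem_compl.2 hj)]
    exact h s hs
  have hbalance' : f j * A = f i * B := by
    rw [← prod_insert hjA, ← prod_insert hiB, ← compl_insert_erase_of_mem_of_notMem hi hj]
    exact h _ hs'
  have hA : A ≠ 0 := ne_zero_of_dvd_ne_zero hf (prod_dvd_prod_of_subset _ _ f (subset_univ _))
  refine mul_right_cancel₀ hA ?_
  calc f i ^ 2 * A = f i * (f j * B) := by rw [← hbalance, sq, mul_assoc]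
    _ = f j * (f i * B) := mul_left_comm _ _ _
    _ = f j ^ 2 * A := by rw [← hbalance', sq, mul_assoc]

variable [CommRing R] [LinearOrder R] [IsStrictOrderedRing R]

lemma choose_mul_prod_le_sum_powersetCard_prod_sq (hι : Fintype.card ι = 2 * r) (f : ι → R) :
    (2 * r).choose r * ∏ i, f i ≤ ∑ s ∈ powersetCard r univ, ∏ i ∈ s, f i ^ 2 := by
  have hsos := sum_powersetCard_sq_prod_sub_prod_compl hι f
  have : 0 ≤ ∑ s ∈ powersetCard r univ, (∏ i ∈ s, f i - ∏ i ∈ sᶜ, f i) ^ 2 :=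
    sum_nonneg fun _ _ ↦ sq_nonneg _
  linarith

lemma sum_powersetCard_prod_sq_eq_choose_mul_prod_iff (hι : Fintype.card ι = 2 * r)
    (f : ι → R) :
    ∑ s ∈ powersetCard r univ, ∏ i ∈ s, f i ^ 2 = (2 * r).choose r * ∏ i, f i ↔
      ∀ s ∈ powersetCard r univ, ∏ i ∈ s, f i = ∏ i ∈ sᶜ, f i := by
  rw [← sub_eq_zero, ← mul_eq_zero_iff_left two_ne_zero,
    ← sum_powersetCard_sq_prod_sub_prod_compl hι f,
    sum_eq_zero_iff_of_nonneg fun _ _ ↦ sq_nonneg _]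
  simp only [sq_eq_zero_iff, sub_eq_zero]

lemma forall_prod_eq_prod_compl_iff (hι : Fintype.card ι = 2 * r) {f : ι → R}
    (hf : ∀ i, 0 ≤ f i) :
    (∀ s ∈ powersetCard r univ, ∏ i ∈ s, f i = ∏ i ∈ sᶜ, f i) ↔
      (∀ i j, f i = f j) ∨ r + 1 ≤ #{i | f i = 0} := by
  refine ⟨fun h ↦ or_iff_not_imp_right.2 fun hz i j ↦ ?_, ?_⟩
  · have hprod := prod_ne_zero_of_forall_prod_eq_prod_compl hι h (by omega)
    exact (sq_eq_sq₀ (hf i) (hf j)).1 (sq_eq_sq_of_forall_prod_eq_prod_compl hι h hprod i j)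
  rintro (hconst | hz) s hs
  · exact prod_eq_prod_compl_of_forall_eq hι hconst hs
  · have hsc := compl_mem_powersetCard_univ_of_card_eq hι hs
    rw [mem_powersetCard_univ] at hs hsc
    rw [prod_eq_zero_of_card_compl_lt (by omega),
      prod_eq_zero_of_card_compl_lt (by rw [compl_compl]; omega)]

end

theorem esymm_sq_ge_binom_prod_general (r : ℕ) (ρ : Fin (2 * r) → ℝ)
    (hρ : ∀ i, 0 ≤ ρ i) :
    (((2 * r).choose r : ℝ) * ∏ i, ρ i ≤
        ∑ s ∈ Finset.powersetCard r (Finset.univ : Finset (Fin (2 * r))), ∏ i ∈ s, ρ i ^ 2) ∧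
    ((∑ s ∈ Finset.powersetCard r (Finset.univ : Finset (Fin (2 * r))), ∏ i ∈ s, ρ i ^ 2 =
        ((2 * r).choose r : ℝ) * ∏ i, ρ i) ↔
      ((∀ i j, ρ i = ρ j) ∨
        r + 1 ≤ (Finset.univ.filter (fun i => ρ i = 0)).card)) := by
  have hι : Fintype.card (Fin (2 * r)) = 2 * r := Fintype.card_fin _
  exact ⟨choose_mul_prod_le_sum_powersetCard_prod_sq hι ρ,
    (sum_powersetCard_prod_sq_eq_choose_mul_prod_iff hι ρ).trans
      (forall_prod_eq_prod_compl_iff hι hρ)⟩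

/-- For `m = 2r` and nonnegative reals `ρ_1, …, ρ_m`, the `r`-th elementary symmetric
polynomial of the squares satisfies `e_r(ρ₁², …, ρ_m²) ≥ C(m, r)·ρ₁⋯ρ_m`, with equality
precisely when all the `ρ_i` are equal or at least `r+1` of them vanish. -/
theorem esymm_sq_ge_binom_prod (r : ℕ) (hr : 1 ≤ r) (ρ : Fin (2 * r) → ℝ)
    (hρ : ∀ i, 0 ≤ ρ i) :
    (((2 * r).choose r : ℝ) * ∏ i, ρ i ≤
        ∑ s ∈ Finset.powersetCard r (Finset.univ : Finset (Fin (2 * r))), ∏ i ∈ s, ρ i ^ 2) ∧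
    ((∑ s ∈ Finset.powersetCard r (Finset.univ : Finset (Fin (2 * r))), ∏ i ∈ s, ρ i ^ 2 =
        ((2 * r).choose r : ℝ) * ∏ i, ρ i) ↔
      ((∀ i j, ρ i = ρ j) ∨
        r + 1 ≤ (Finset.univ.filter (fun i => ρ i = 0)).card)) :=
  esymm_sq_ge_binom_prod_general r ρ hρ
end

section
/- Let μ = (μ₁, μ₂, μ₃) ∈ ℝ³, and define K₁₂ = (μ₁+μ₂)μ₃ − μ₁μ₂, K₁₃ = (μ₁+μ₃)μ₂ − μ₁μ₃, K₂₃ = (μ₂+μ₃)μ₁ − μ₂μ₃. Suppose σ = (σ₁, σ₂, σ₃) ∈ ℝ³ is nonzero and satisfies K_{ij}·(σ_j e_i − σ_i e_j) = 0 in ℝ³ for every pair i < j. Then K₁₂ = K₁₃ = K₂₃ = 0. -/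
/-!
Each hypothesis says `K_{ij} σ_i = K_{ij} σ_j = 0`, so a nonzero coordinate `σ_i` kills the two
curvatures `K_{ij}` and `K_{ik}`. The third one then vanishes too: if `K₁₂ = K₁₃ = 0` then
`K₁₂ + K₁₃ = 2 μ₂ μ₃ = 0`, so one of `μ₂, μ₃` is zero and `K₂₃ = ± K₁₂`.
-/

def principalCurvature {R : Type*} [CommRing R] (x y z : R) : R := (x + y) * z - x * y

section PrincipalCurvature

variable {R : Type*} [CommRing R]

theorem principalCurvature_comm (x y z : R) :
    principalCurvature x y z = principalCurvature y x z := by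
  unfold principalCurvature; ring

theorem principalCurvature_eq_zero_of_eq_zero_of_eq_zero [NoZeroDivisors R] {x y z : R}
    (hz : principalCurvature x y z = 0) (hy : principalCurvature x z y = 0) :
    principalCurvature y z x = 0 := by
  unfold principalCurvature at *
  have hyz : 2 * (y * z) = 0 := by linear_combination hz + hy
  rcases mul_eq_zero.1 hyz with h2 | hyz
  · linear_combination hz + (x * y - y * z) * h2
  · rcases mul_eq_zero.1 hyz with rfl | rfl
    · linear_combination hz
    · linear_combination -hz

end PrincipalCurvature

theorem eq_zero_or_of_smul_sub_smul_single_eq_zero {ι R : Type*} [DecidableEq ι] [Ring R]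
    [NoZeroDivisors R] {i j : ι} (hij : i ≠ j) {c s t : R}
    (h : c • (s • Pi.single i (1 : R) - t • Pi.single j (1 : R) : ι → R) = 0) :
    c = 0 ∨ s = 0 ∧ t = 0 := by
  have hi := congrFun h i
  have hj := congrFun h j
  simp only [Pi.smul_apply, Pi.sub_apply, Pi.single_apply, hij, hij.symm, if_true, if_false,
    smul_eq_mul, mul_one, mul_zero, sub_zero, zero_sub, neg_eq_zero, Pi.zero_apply,
    mul_eq_zero] at hi hj
  tauto

/-- If a nonzero `σ ∈ ℝ³` satisfies `K_{ij}·(σ_j e_i − σ_i e_j) = 0` for every pair `i < j`,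
where `K_{ij} = (μ_i+μ_j)μ_k − μ_iμ_j` are the principal sectional curvatures, then
`K₁₂ = K₁₃ = K₂₃ = 0`; i.e. a flat invariant vector field forces the metric to be flat. -/
theorem flat_section_implies_flat (μ σ : Fin 3 → ℝ) (hσ : σ ≠ 0)
    (h12 : ((μ 0 + μ 1) * μ 2 - μ 0 * μ 1) •
        (σ 1 • (Pi.single 0 1 : Fin 3 → ℝ) - σ 0 • (Pi.single 1 1 : Fin 3 → ℝ)) = 0)
    (h13 : ((μ 0 + μ 2) * μ 1 - μ 0 * μ 2) •
        (σ 2 • (Pi.single 0 1 : Fin 3 → ℝ) - σ 0 • (Pi.single 2 1 : Fin 3 → ℝ)) = 0)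
    (h23 : ((μ 1 + μ 2) * μ 0 - μ 1 * μ 2) •
        (σ 2 • (Pi.single 1 1 : Fin 3 → ℝ) - σ 1 • (Pi.single 2 1 : Fin 3 → ℝ)) = 0) :
    (μ 0 + μ 1) * μ 2 - μ 0 * μ 1 = 0 ∧
    (μ 0 + μ 2) * μ 1 - μ 0 * μ 2 = 0 ∧
    (μ 1 + μ 2) * μ 0 - μ 1 * μ 2 = 0 := by
  have k12 := eq_zero_or_of_smul_sub_smul_single_eq_zero (by decide) h12
  have k13 := eq_zero_or_of_smul_sub_smul_single_eq_zero (by decide) h13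
  have k23 := eq_zero_or_of_smul_sub_smul_single_eq_zero (by decide) h23
  obtain ⟨i, hi⟩ := Function.ne_iff.1 hσ
  fin_cases i
  · have e12 := k12.resolve_right fun h ↦ hi h.2
    have e13 := k13.resolve_right fun h ↦ hi h.2
    exact ⟨e12, e13, principalCurvature_eq_zero_of_eq_zero_of_eq_zero e12 e13⟩
  · have e12 := k12.resolve_right fun h ↦ hi h.1
    have e23 := k23.resolve_right fun h ↦ hi h.2
    refine ⟨e12, ?_, e23⟩
    exact principalCurvature_eq_zero_of_eq_zero_of_eq_zero
      ((principalCurvature_comm _ _ _).trans e12) e23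
  · have e13 := k13.resolve_right fun h ↦ hi h.1
    have e23 := k23.resolve_right fun h ↦ hi h.1
    refine ⟨?_, e13, e23⟩
    exact principalCurvature_eq_zero_of_eq_zero_of_eq_zero
      ((principalCurvature_comm _ _ _).trans e13) ((principalCurvature_comm _ _ _).trans e23)
end

section
/- Let μ = (μ₁, μ₂, μ₃) ∈ ℝ³ and σ ∈ ℝ³, and set ρ₁ = 2μ₂μ₃, ρ₂ = 2μ₁μ₃, ρ₃ = 2μ₁μ₂. Then Σ_{1≤i<j≤3} μ_i²μ_j² ( |e_i × σ|² · |e_j × σ|² − ⟨e_i × σ, e_j × σ⟩² ) = (1/4) · |σ|² · (ρ₁²σ₁² + ρ₂²σ₂² + ρ₃²σ₃²). -/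
/-!
By Lagrange's identity the Gram determinant of `eᵢ × σ` and `eⱼ × σ` is `|(eᵢ × σ) × (eⱼ × σ)|²`,
and `(a × c) × (b × c) = ⟨a, b × c⟩ c`. For `{i, j, k} = {1, 2, 3}` the triple product
`⟨eᵢ, eⱼ × σ⟩` is `±σₖ`, so the `(i, j)` term is `μᵢ²μⱼ² σₖ² |σ|² = ¼ ρₖ² σₖ² |σ|²`.
-/

open Matrix

section CrossProduct

variable {R : Type*} [CommRing R]

theorem dotProduct_self_mul_sub_sq_eq_cross_dot_cross (u v : Fin 3 → R) :
    u ⬝ᵥ u * (v ⬝ᵥ v) - (u ⬝ᵥ v) ^ 2 = u ⨯₃ v ⬝ᵥ u ⨯₃ v := by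
  rw [cross_dot_cross, dotProduct_comm v u]
  ring

theorem cross_cross_cross_eq_triple_product_smul (a b c : Fin 3 → R) :
    (a ⨯₃ c) ⨯₃ (b ⨯₃ c) = (a ⬝ᵥ b ⨯₃ c) • c := by
  rw [cross_cross_eq_smul_sub_smul', dotProduct_comm, dot_cross_self, zero_smul, zero_sub,
    triple_product_permutation, ← cross_anticomm, dotProduct_neg, neg_smul, neg_neg]

theorem gram_cross_eq_triple_product_sq_mul (a b c : Fin 3 → R) :
    a ⨯₃ c ⬝ᵥ a ⨯₃ c * (b ⨯₃ c ⬝ᵥ b ⨯₃ c) - (a ⨯₃ c ⬝ᵥ b ⨯₃ c) ^ 2 =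
      (a ⬝ᵥ b ⨯₃ c) ^ 2 * (c ⬝ᵥ c) := by
  rw [dotProduct_self_mul_sub_sq_eq_cross_dot_cross, cross_cross_cross_eq_triple_product_smul,
    smul_dotProduct, dotProduct_smul, smul_eq_mul, smul_eq_mul]
  ring

end CrossProduct

/-- `Σ_{i<j} μ_i²μ_j²( |e_i×σ|²|e_j×σ|² − ⟨e_i×σ, e_j×σ⟩² ) = ¼|σ|²(ρ₁²σ₁²+ρ₂²σ₂²+ρ₃²σ₃²)`,
where `ρ₁ = 2μ₂μ₃`, `ρ₂ = 2μ₁μ₃`, `ρ₃ = 2μ₁μ₂`: the squared norm `‖∇σ∧∇σ‖²` equals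
`¼|σ|²|Ric(σ)|²`. -/
theorem norm_sq_wedge_eq_ric (μ σ : Fin 3 → ℝ) :
    μ 0 ^ 2 * μ 1 ^ 2 *
        (((Pi.single 0 1 : Fin 3 → ℝ) ⨯₃ σ) ⬝ᵥ ((Pi.single 0 1 : Fin 3 → ℝ) ⨯₃ σ) *
            (((Pi.single 1 1 : Fin 3 → ℝ) ⨯₃ σ) ⬝ᵥ ((Pi.single 1 1 : Fin 3 → ℝ) ⨯₃ σ)) -
          (((Pi.single 0 1 : Fin 3 → ℝ) ⨯₃ σ) ⬝ᵥ ((Pi.single 1 1 : Fin 3 → ℝ) ⨯₃ σ)) ^ 2) +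
      μ 0 ^ 2 * μ 2 ^ 2 *
        (((Pi.single 0 1 : Fin 3 → ℝ) ⨯₃ σ) ⬝ᵥ ((Pi.single 0 1 : Fin 3 → ℝ) ⨯₃ σ) *
            (((Pi.single 2 1 : Fin 3 → ℝ) ⨯₃ σ) ⬝ᵥ ((Pi.single 2 1 : Fin 3 → ℝ) ⨯₃ σ)) -
          (((Pi.single 0 1 : Fin 3 → ℝ) ⨯₃ σ) ⬝ᵥ ((Pi.single 2 1 : Fin 3 → ℝ) ⨯₃ σ)) ^ 2) +
      μ 1 ^ 2 * μ 2 ^ 2 *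
        (((Pi.single 1 1 : Fin 3 → ℝ) ⨯₃ σ) ⬝ᵥ ((Pi.single 1 1 : Fin 3 → ℝ) ⨯₃ σ) *
            (((Pi.single 2 1 : Fin 3 → ℝ) ⨯₃ σ) ⬝ᵥ ((Pi.single 2 1 : Fin 3 → ℝ) ⨯₃ σ)) -
          (((Pi.single 1 1 : Fin 3 → ℝ) ⨯₃ σ) ⬝ᵥ ((Pi.single 2 1 : Fin 3 → ℝ) ⨯₃ σ)) ^ 2) =
    (1 / 4 : ℝ) * (σ ⬝ᵥ σ) *
      ((2 * μ 1 * μ 2) ^ 2 * σ 0 ^ 2 + (2 * μ 0 * μ 2) ^ 2 * σ 1 ^ 2 +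
        (2 * μ 0 * μ 1) ^ 2 * σ 2 ^ 2) := by
  simp only [gram_cross_eq_triple_product_sq_mul]
  have h₀₁ : (Pi.single 0 1 : Fin 3 → ℝ) ⬝ᵥ (Pi.single 1 1 : Fin 3 → ℝ) ⨯₃ σ = σ 2 := by
    simp [cross_apply, single_dotProduct]
  have h₀₂ : (Pi.single 0 1 : Fin 3 → ℝ) ⬝ᵥ (Pi.single 2 1 : Fin 3 → ℝ) ⨯₃ σ = -σ 1 := by
    simp [cross_apply, single_dotProduct]
  have h₁₂ : (Pi.single 1 1 : Fin 3 → ℝ) ⬝ᵥ (Pi.single 2 1 : Fin 3 → ℝ) ⨯₃ σ = σ 0 := by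
    simp [cross_apply, single_dotProduct]
  rw [h₀₁, h₀₂, h₁₂]
  ring
end

section
/- Let μ = (μ₁, μ₂, μ₃) ∈ ℝ³, let M(v) = (μ₁v₁, μ₂v₂, μ₃v₃), let σ ∈ ℝ³ with |σ| = 1, and define ν : ℝ³ → ℝ³ by ν(v) = (μ₁² + μ₂² + μ₃² − |M(σ)|²)·v − M(M(v)) + ⟨v, M(σ)⟩·M(σ). Then Σ_{i=1}^{3} μ_i · (e_i × ν(e_i)) = M(M(σ)) × M(σ). -/
/-!
Since `M` is diagonal, `eᵢ × ν(eᵢ)` only sees the part of `ν(eᵢ)` transverse to `eᵢ`: the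
multiple of the identity and `M²` contribute nothing. What remains is
`Σᵢ μᵢ ⟨eᵢ, Mσ⟩ eᵢ × Mσ`, and `Σᵢ μᵢ ⟨eᵢ, Mσ⟩ eᵢ = M(Mσ)`.
-/

open Matrix

/-- The Milnor map: `M(v) = (μ₁v₁, μ₂v₂, μ₃v₃)`. -/
def milnorMap (μ v : Fin 3 → ℝ) : Fin 3 → ℝ := fun i => μ i * v i

theorem milnorMap_smul (μ v : Fin 3 → ℝ) (c : ℝ) :
    milnorMap μ (c • v) = c • milnorMap μ v := by
  ext i
  simp only [milnorMap, Pi.smul_apply, smul_eq_mul]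
  ring

theorem milnorMap_single_one (μ : Fin 3 → ℝ) (i : Fin 3) :
    milnorMap μ (Pi.single i 1) = μ i • Pi.single i 1 := by
  ext j
  rcases eq_or_ne j i with rfl | hji <;> simp [milnorMap, *]

theorem milnorMap_eq_sum_smul_single (μ w : Fin 3 → ℝ) :
    milnorMap μ w = ∑ i, (μ i * w i) • Pi.single i 1 := by
  simpa [milnorMap] using pi_eq_sum_univ' (milnorMap μ w)

theorem cross_smul_self {R : Type*} [CommRing R] (v : Fin 3 → R) (c : R) :
    v ⨯₃ (c • v) = 0 := by
  rw [map_smul, cross_self, smul_zero]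

theorem sum_smul_single_cross_dotProduct_smul (μ w : Fin 3 → ℝ) :
    ∑ i : Fin 3, μ i • ((Pi.single i 1 : Fin 3 → ℝ) ⨯₃ ((Pi.single i 1 ⬝ᵥ w) • w)) =
      milnorMap μ w ⨯₃ w := by
  simp only [single_one_dotProduct, map_smul, smul_smul, milnorMap_eq_sum_smul_single,
    map_sum, LinearMap.sum_apply, LinearMap.smul_apply]

theorem div_newton_one_general (μ σ : Fin 3 → ℝ)
    (ν : (Fin 3 → ℝ) → (Fin 3 → ℝ))
    (hν : ∀ v, ν v =
      (μ 0 ^ 2 + μ 1 ^ 2 + μ 2 ^ 2 - milnorMap μ σ ⬝ᵥ milnorMap μ σ) • v -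
        milnorMap μ (milnorMap μ v) + (v ⬝ᵥ milnorMap μ σ) • milnorMap μ σ) :
    ∑ i : Fin 3, μ i • ((Pi.single i 1 : Fin 3 → ℝ) ⨯₃ ν (Pi.single i 1)) =
      milnorMap μ (milnorMap μ σ) ⨯₃ milnorMap μ σ := by
  simp only [hν, milnorMap_single_one, milnorMap_smul, map_add, map_sub, cross_smul_self,
    smul_smul, sub_self, zero_add]
  exact sum_smul_single_cross_dotProduct_smul μ (milnorMap μ σ)

/-- The divergence of the first vertical Newton tensor
`ν(v) = (‖μ‖² − |Mσ|²)v − M²(v) + ⟨v, Mσ⟩Mσ` of a unit vector field `σ` is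
`Σᵢ μᵢ (eᵢ × ν(eᵢ)) = M²(σ) × M(σ)`. -/
theorem div_newton_one (μ σ : Fin 3 → ℝ) (hσ : σ ⬝ᵥ σ = 1)
    (ν : (Fin 3 → ℝ) → (Fin 3 → ℝ))
    (hν : ∀ v, ν v =
      (μ 0 ^ 2 + μ 1 ^ 2 + μ 2 ^ 2 - milnorMap μ σ ⬝ᵥ milnorMap μ σ) • v -
        milnorMap μ (milnorMap μ v) + (v ⬝ᵥ milnorMap μ σ) • milnorMap μ σ) :
    ∑ i : Fin 3, μ i • ((Pi.single i 1 : Fin 3 → ℝ) ⨯₃ ν (Pi.single i 1)) =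
      milnorMap μ (milnorMap μ σ) ⨯₃ milnorMap μ σ :=
  div_newton_one_general μ σ ν hν
end

section
/- Let μ = (μ₁, μ₂, μ₃) ∈ ℝ³, let M(v) = (μ₁v₁, μ₂v₂, μ₃v₃), and let σ ∈ ℝ³ be nonzero. Then M(M(σ)) × M(σ) = 0 if and only if at least one of the following holds: (a) σ is an eigenvector of M (there exists c ∈ ℝ with μ_iσ_i = cσ_i for i = 1,2,3); (b) at least two of μ₁, μ₂, μ₃ are zero; (c) there exist an index k with μ_k = 0 and a nonzero eigenvector w of M such that σ lies in the linear span of e_k and w. -/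
/-!
`M(Mσ) × Mσ` vanishes iff `M(Mσ)` is a multiple of `Mσ`, i.e. iff `μ` is constant on the
support of `Mσ = μ * σ`. If two of the `μᵢ` vanish, that support has at most one point. If no
`μ_k` vanishes, it is the support of `σ`, and `σ` is an eigenvector. If exactly one `μ_k`
vanishes, then `σ` with its `k`-th coordinate deleted is an eigenvector `w` (or zero), and
`σ ∈ span(e_k, w)`.
-/

open Matrix

theorem milnorMap_eq_mul (μ v : Fin 3 → ℝ) : milnorMap μ v = μ * v := rfl

theorem Pi.mul_eq_smul_iff {ι M : Type*} [MonoidWithZero M] [IsRightCancelMulZero M]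
    {μ v : ι → M} {c : M} :
    μ * v = c • v ↔ ∀ i, v i ≠ 0 → μ i = c := by
  simp only [funext_iff, Pi.mul_apply, Pi.smul_apply, smul_eq_mul, mul_eq_mul_right_iff]
  exact forall_congr' fun _ => or_iff_not_imp_right

theorem mul_eq_smul_of_eq_add_smul {ι K : Type*} [DecidableEq ι] [CommSemiring K]
    {μ σ w : ι → K} {k : ι} {a b c : K} (hk : μ k = 0) (hw : μ * w = c • w)
    (hσ : σ = a • Pi.single k 1 + b • w) : μ * σ = (b * c) • w := by
  rw [hσ, mul_add, mul_smul_comm, mul_smul_comm, hw, ← Pi.single_mul_right, hk, zero_mul,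
    Pi.single_zero, smul_zero, zero_add, smul_smul]

section Field

variable {K : Type*} [Field K]

theorem cross_eq_zero_iff_exists_eq_smul {u v : Fin 3 → K} (hv : v ≠ 0) :
    u ⨯₃ v = 0 ↔ ∃ c : K, u = c • v := by
  rw [← cross_anticomm, neg_eq_zero, ← not_iff_not, ← ne_eq,
    crossProduct_ne_zero_iff_linearIndependent, LinearIndependent.pair_iff' hv]
  simp [eq_comm]

theorem mul_cross_eq_zero_iff {μ v : Fin 3 → K} : (μ * v) ⨯₃ v = 0 ↔ ∃ c : K, μ * v = c • v := by
  rcases eq_or_ne v 0 with rfl | hv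
  · simp
  · exact cross_eq_zero_iff_exists_eq_smul hv

end Field

theorem fin3_eq_of_ne_of_ne {i j k l : Fin 3} (hij : i ≠ j) (hki : k ≠ i) (hkj : k ≠ j)
    (hli : l ≠ i) (hlj : l ≠ j) : k = l := by
  omega

section Domain

variable {K : Type*} [CommRing K] [IsDomain K]

theorem exists_mul_mul_eq_smul_mul_of_two_zeros {μ σ : Fin 3 → K} {i j : Fin 3} (hij : i ≠ j)
    (hi : μ i = 0) (hj : μ j = 0) : ∃ c : K, μ * (μ * σ) = c • (μ * σ) := by
  simp only [Pi.mul_eq_smul_iff, Pi.mul_apply, ne_eq, mul_eq_zero, not_or]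
  have hne : ∀ m, μ m ≠ 0 → m ≠ i ∧ m ≠ j := fun m hm =>
    ⟨by rintro rfl; exact hm hi, by rintro rfl; exact hm hj⟩
  by_cases h : ∃ l, μ l ≠ 0
  · obtain ⟨l, hl⟩ := h
    refine ⟨μ l, fun m hm => congrArg μ ?_⟩
    exact fin3_eq_of_ne_of_ne hij (hne m hm.1).1 (hne m hm.1).2 (hne l hl).1 (hne l hl).2
  · push Not at h
    exact ⟨0, fun m hm => (hm.1 (h m)).elim⟩

theorem mul_eq_smul_or_of_mul_mul_eq_smul_mul {μ σ : Fin 3 → K} {c : K}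
    (h : μ * (μ * σ) = c • (μ * σ)) :
    (∃ c : K, μ * σ = c • σ) ∨ (∃ i j : Fin 3, i ≠ j ∧ μ i = 0 ∧ μ j = 0) ∨
      ∃ (k : Fin 3) (w : Fin 3 → K) (c : K), μ k = 0 ∧ w ≠ 0 ∧ μ * w = c • w ∧
        ∃ a b : K, σ = a • Pi.single k 1 + b • w := by
  rw [Pi.mul_eq_smul_iff] at h
  by_cases hzero : ∃ k, μ k = 0
  swap
  · push Not at hzero
    exact .inl ⟨c, Pi.mul_eq_smul_iff.2 fun i hi => h i (mul_ne_zero (hzero i) hi)⟩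
  obtain ⟨k, hk⟩ := hzero
  by_cases htwo : ∃ j, j ≠ k ∧ μ j = 0
  · obtain ⟨j, hjk, hj⟩ := htwo
    exact .inr (.inl ⟨j, k, hjk, hj, hk⟩)
  push Not at htwo
  set w := Function.update σ k 0 with hw_def
  have hw : μ * w = c • w := Pi.mul_eq_smul_iff.2 fun i hi => by
    have hik : i ≠ k := by rintro rfl; simp [w] at hi
    rw [hw_def, Function.update_of_ne hik] at hi
    exact h i (mul_ne_zero (htwo i hik) hi)
  have hσ : σ = σ k • Pi.single k 1 + (1 : K) • w := by
    ext i
    rcases eq_or_ne i k with rfl | hik <;> simp [w, *]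
  rcases eq_or_ne w 0 with hw0 | hw0
  · refine .inl ⟨0, ?_⟩
    rw [mul_eq_smul_of_eq_add_smul hk hw hσ, hw0, smul_zero, zero_smul]
  · exact .inr (.inr ⟨k, w, c, hk, hw0, hw, σ k, 1, hσ⟩)

end Domain

theorem div_newton_eq_zero_iff_general (μ σ : Fin 3 → ℝ) :
    milnorMap μ (milnorMap μ σ) ⨯₃ milnorMap μ σ = 0 ↔
      ((∃ c : ℝ, ∀ i, μ i * σ i = c * σ i) ∨
       (∃ i j : Fin 3, i ≠ j ∧ μ i = 0 ∧ μ j = 0) ∨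
       (∃ (k : Fin 3) (w : Fin 3 → ℝ) (c : ℝ), μ k = 0 ∧ w ≠ 0 ∧
          milnorMap μ w = c • w ∧
          ∃ a b : ℝ, σ = a • (Pi.single k 1 : Fin 3 → ℝ) + b • w)) := by
  have eigen_iff : (∃ c : ℝ, ∀ i, μ i * σ i = c * σ i) ↔ ∃ c : ℝ, μ * σ = c • σ := by
    simp [funext_iff]
  simp only [milnorMap_eq_mul, mul_cross_eq_zero_iff, eigen_iff]
  constructor
  · rintro ⟨c, hc⟩
    exact mul_eq_smul_or_of_mul_mul_eq_smul_mul hc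
  · rintro (⟨c, hc⟩ | ⟨i, j, hij, hi, hj⟩ | ⟨k, w, c, hk, -, hw, a, b, hσ⟩)
    · exact ⟨c, by rw [hc, mul_smul_comm, hc]⟩
    · exact exists_mul_mul_eq_smul_mul_of_two_zeros hij hi hj
    · refine ⟨c, ?_⟩
      rw [mul_eq_smul_of_eq_add_smul hk hw hσ, mul_smul_comm, hw, smul_comm]

/-- For nonzero `σ`, `M²(σ) × M(σ) = 0` iff (a) `σ` is an eigenvector of `M`, or
(b) at least two of the `μᵢ` vanish, or (c) there are an index `k` with `μ_k = 0` and a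
nonzero eigenvector `w` of `M` such that `σ` lies in the span of `e_k` and `w`. -/
theorem div_newton_eq_zero_iff (μ σ : Fin 3 → ℝ) (hσ : σ ≠ 0) :
    milnorMap μ (milnorMap μ σ) ⨯₃ milnorMap μ σ = 0 ↔
      ((∃ c : ℝ, ∀ i, μ i * σ i = c * σ i) ∨
       (∃ i j : Fin 3, i ≠ j ∧ μ i = 0 ∧ μ j = 0) ∨
       (∃ (k : Fin 3) (w : Fin 3 → ℝ) (c : ℝ), μ k = 0 ∧ w ≠ 0 ∧
          milnorMap μ w = c • w ∧
          ∃ a b : ℝ, σ = a • (Pi.single k 1 : Fin 3 → ℝ) + b • w)) :=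
  div_newton_eq_zero_iff_general μ σ
end

section
/- Let μ = (μ₁, μ₂, μ₃) ∈ ℝ³, let M(v) = (μ₁v₁, μ₂v₂, μ₃v₃), set ρ₁ = 2μ₂μ₃, ρ₂ = 2μ₁μ₃, ρ₃ = 2μ₁μ₂, let R(v) = (ρ₁v₁, ρ₂v₂, ρ₃v₃), and let σ ∈ ℝ³ with |σ| = 1. Define B = (μ₁²+μ₂²+μ₃²)·|M(σ)|² − |M(M(σ))|² − 2(μ₁²μ₂² + μ₂²μ₃² + μ₃²μ₁²). Then B·σ + (μ₁²+μ₂²+μ₃²)·M(M(σ)) − M⁴(σ) = −(1/4)·( |R(σ)|²·σ + R(R(σ)) ), where M⁴ denotes the fourth iterate of M. -/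
open Matrix

/-- For a unit vector `σ`, with `ρ = (2μ₂μ₃, 2μ₁μ₃, 2μ₁μ₂)` the principal Ricci curvatures
(so `R` is the Ricci endomorphism) and
`B = ‖μ‖²|Mσ|² − |M²σ|² − 2(μ₁²μ₂²+μ₂²μ₃²+μ₃²μ₁²)`:
`B·σ + ‖μ‖²·M²σ − M⁴σ = −¼(|Rσ|²σ + R²σ)`, i.e. `−4𝒯₂(σ) = |Ric σ|²σ + Ric²σ`. -/
theorem tension_two_eq_ric (μ σ : Fin 3 → ℝ) (hσ : σ ⬝ᵥ σ = 1)
    (ρ : Fin 3 → ℝ) (hρ : ρ = ![2 * μ 1 * μ 2, 2 * μ 0 * μ 2, 2 * μ 0 * μ 1])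
    (B : ℝ)
    (hB : B = (μ 0 ^ 2 + μ 1 ^ 2 + μ 2 ^ 2) * (milnorMap μ σ ⬝ᵥ milnorMap μ σ) -
        milnorMap μ (milnorMap μ σ) ⬝ᵥ milnorMap μ (milnorMap μ σ) -
        2 * (μ 0 ^ 2 * μ 1 ^ 2 + μ 1 ^ 2 * μ 2 ^ 2 + μ 2 ^ 2 * μ 0 ^ 2)) :
    B • σ + (μ 0 ^ 2 + μ 1 ^ 2 + μ 2 ^ 2) • milnorMap μ (milnorMap μ σ) -
        milnorMap μ (milnorMap μ (milnorMap μ (milnorMap μ σ))) =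
      -(1 / 4 : ℝ) • ((milnorMap ρ σ ⬝ᵥ milnorMap ρ σ) • σ + milnorMap ρ (milnorMap ρ σ)) := by
  subst hρ hB
  have h1 : σ 0 ^ 2 + σ 1 ^ 2 + σ 2 ^ 2 = 1 := by
    simpa [dotProduct, Fin.sum_univ_three, sq] using hσ
  funext i
  fin_cases i <;>
    simp [milnorMap, dotProduct, Fin.sum_univ_three, Pi.add_apply, Pi.sub_apply,
      Pi.smul_apply, smul_eq_mul] <;>
    first
    | linear_combination (σ 0 * (μ 0 ^ 2 * μ 1 ^ 2 + μ 1 ^ 2 * μ 2 ^ 2 + μ 2 ^ 2 * μ 0 ^ 2)) * h1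
    | linear_combination (σ 1 * (μ 0 ^ 2 * μ 1 ^ 2 + μ 1 ^ 2 * μ 2 ^ 2 + μ 2 ^ 2 * μ 0 ^ 2)) * h1
    | linear_combination (σ 2 * (μ 0 ^ 2 * μ 1 ^ 2 + μ 1 ^ 2 * μ 2 ^ 2 + μ 2 ^ 2 * μ 0 ^ 2)) * h1
end

section
/- Let λ = (λ₁, λ₂, λ₃) ∈ ℝ³, define μ_i = (λ₁+λ₂+λ₃)/2 − λ_i for i = 1,2,3, and set ρ₁ = 2μ₂μ₃, ρ₂ = 2μ₁μ₃, ρ₃ = 2μ₁μ₂. Let σ ∈ ℝ³ with |σ| = 1. Then there exists c ∈ ℝ with ρ_i²σ_i = cσ_i for i = 1,2,3 if and only if at least one of the following holds: (a) there exists c′ ∈ ℝ with λ_iσ_i = c′σ_i for all i; (b) there exists a nonzero v ∈ ℝ³ with λ_i v_i = 0 for all i and ⟨σ, v⟩ = 0; (c) ρ_iσ_i = 0 for all i. -/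
open Matrix

private lemma aux (m0 m1 m2 s0 s1 s2 : ℝ) (hs : s0^2 + s1^2 + s2^2 = 1) :
    (∃ c : ℝ, (2*m1*m2)^2 * s0 = c * s0 ∧ (2*m0*m2)^2 * s1 = c * s1 ∧ (2*m0*m1)^2 * s2 = c * s2)
    ↔ ((∃ c' : ℝ, (m1+m2) * s0 = c' * s0 ∧ (m0+m2) * s1 = c' * s1 ∧ (m0+m1) * s2 = c' * s2)
      ∨ (∃ v0 v1 v2 : ℝ, ¬(v0 = 0 ∧ v1 = 0 ∧ v2 = 0) ∧
          (m1+m2) * v0 = 0 ∧ (m0+m2) * v1 = 0 ∧ (m0+m1) * v2 = 0 ∧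
          s0*v0 + s1*v1 + s2*v2 = 0)
      ∨ ((2*m1*m2) * s0 = 0 ∧ (2*m0*m2) * s1 = 0 ∧ (2*m0*m1) * s2 = 0)) := by
  constructor
  · rintro ⟨c, e0, e1, e2⟩
    by_cases h0 : s0 = 0 <;> by_cases h1 : s1 = 0 <;> by_cases h2 : s2 = 0
    · exact absurd hs (by rw [h0, h1, h2]; norm_num)
    · exact Or.inl ⟨m0+m1, by rw [h0]; ring, by rw [h1]; ring, rfl⟩
    · exact Or.inl ⟨m0+m2, by rw [h0]; ring, rfl, by rw [h2]; ring⟩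
    · -- s0 = 0, s1 ≠ 0, s2 ≠ 0
      have E1 : (2*m0*m2)^2 = c := mul_right_cancel₀ h1 e1
      have E2 : (2*m0*m1)^2 = c := mul_right_cancel₀ h2 e2
      have key : m0^2 * ((m2-m1)*(m2+m1)) = 0 := by linear_combination (E1 - E2)/4
      rcases mul_eq_zero.mp key with hA | hB
      · have hm0 : m0 = 0 := sq_eq_zero_iff.mp hA
        exact Or.inr (Or.inr ⟨by rw [h0]; ring, by rw [hm0]; ring, by rw [hm0]; ring⟩)
      · rcases mul_eq_zero.mp hB with hB1 | hB2
        · exact Or.inl ⟨m0+m1, by rw [h0]; ring, by linear_combination s1*hB1, rfl⟩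
        · exact Or.inr (Or.inl ⟨1, 0, 0, by simp, by linear_combination hB2, by ring, by ring,
            by rw [h0]; ring⟩)
    · exact Or.inl ⟨m1+m2, rfl, by rw [h1]; ring, by rw [h2]; ring⟩
    · -- s0 ≠ 0, s1 = 0, s2 ≠ 0
      have E0 : (2*m1*m2)^2 = c := mul_right_cancel₀ h0 e0
      have E2 : (2*m0*m1)^2 = c := mul_right_cancel₀ h2 e2
      have key : m1^2 * ((m2-m0)*(m2+m0)) = 0 := by linear_combination (E0 - E2)/4
      rcases mul_eq_zero.mp key with hA | hB
      · have hm1 : m1 = 0 := sq_eq_zero_iff.mp hA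
        exact Or.inr (Or.inr ⟨by rw [hm1]; ring, by rw [h1]; ring, by rw [hm1]; ring⟩)
      · rcases mul_eq_zero.mp hB with hB1 | hB2
        · exact Or.inl ⟨m1+m2, rfl, by rw [h1]; ring, by linear_combination (-s2)*hB1⟩
        · exact Or.inr (Or.inl ⟨0, 1, 0, by simp, by ring, by linear_combination hB2, by ring,
            by rw [h1]; ring⟩)
    · -- s0 ≠ 0, s1 ≠ 0, s2 = 0
      have E0 : (2*m1*m2)^2 = c := mul_right_cancel₀ h0 e0
      have E1 : (2*m0*m2)^2 = c := mul_right_cancel₀ h1 e1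
      have key : m2^2 * ((m1-m0)*(m1+m0)) = 0 := by linear_combination (E0 - E1)/4
      rcases mul_eq_zero.mp key with hA | hB
      · have hm2 : m2 = 0 := sq_eq_zero_iff.mp hA
        exact Or.inr (Or.inr ⟨by rw [hm2]; ring, by rw [hm2]; ring, by rw [h2]; ring⟩)
      · rcases mul_eq_zero.mp hB with hB1 | hB2
        · exact Or.inl ⟨m1+m2, rfl, by linear_combination (-s1)*hB1, by rw [h2]; ring⟩
        · exact Or.inr (Or.inl ⟨0, 0, 1, by simp, by ring, by ring, by linear_combination hB2,
            by rw [h2]; ring⟩)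
    · -- full support
      have E0 : (2*m1*m2)^2 = c := mul_right_cancel₀ h0 e0
      have E1 : (2*m0*m2)^2 = c := mul_right_cancel₀ h1 e1
      have E2 : (2*m0*m1)^2 = c := mul_right_cancel₀ h2 e2
      have key1 : m2^2 * ((m1-m0)*(m1+m0)) = 0 := by linear_combination (E0 - E1)/4
      rcases mul_eq_zero.mp key1 with hA | hB
      · have hm2 : m2 = 0 := sq_eq_zero_iff.mp hA
        have hc : c = 0 := by linear_combination -E0 + (4*m1^2*m2)*hm2
        have h01 : 2*m0*m1 = 0 := sq_eq_zero_iff.mp (by rw [E2, hc])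
        exact Or.inr (Or.inr ⟨by rw [hm2]; ring, by rw [hm2]; ring,
          by linear_combination s2*h01⟩)
      · have key2 : m0^2 * ((m2-m1)*(m2+m1)) = 0 := by linear_combination (E1 - E2)/4
        rcases mul_eq_zero.mp key2 with hC | hD
        · have hm0 : m0 = 0 := sq_eq_zero_iff.mp hC
          have hc : c = 0 := by linear_combination -E1 + (4*m2^2*m0)*hm0
          have h12 : 2*m1*m2 = 0 := sq_eq_zero_iff.mp (by rw [E0, hc])
          exact Or.inr (Or.inr ⟨by linear_combination s0*h12, by rw [hm0]; ring,
            by rw [hm0]; ring⟩)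
        · rcases mul_eq_zero.mp hB with hB1 | hB2 <;> rcases mul_eq_zero.mp hD with hD1 | hD2
          · -- m1 = m0, m2 = m1
            exact Or.inl ⟨m1+m2, rfl, by linear_combination (-s1)*hB1,
              by linear_combination (-s2)*hB1 + (-s2)*hD1⟩
          · -- m1 = m0, m2 = -m1
            refine Or.inr (Or.inl ⟨s1, -s0, 0, ?_, ?_, ?_, by ring, by ring⟩)
            · rintro ⟨-, h, -⟩; exact h0 (by linarith)
            · linear_combination s1*hD2
            · linear_combination s0*hB1 + (-s0)*hD2
          · -- m1 = -m0, m2 = m1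
            refine Or.inr (Or.inl ⟨0, s2, -s1, ?_, by ring, ?_, ?_, by ring⟩)
            · rintro ⟨-, -, h⟩; exact h1 (by linarith)
            · linear_combination s2*hB2 + s2*hD1
            · linear_combination (-s1)*hB2
          · -- m1 = -m0, m2 = -m1
            refine Or.inr (Or.inl ⟨s2, 0, -s0, ?_, ?_, by ring, ?_, by ring⟩)
            · rintro ⟨-, -, h⟩; exact h0 (by linarith)
            · linear_combination s2*hD2
            · linear_combination (-s0)*hB2
  · rintro (⟨c', a0, a1, a2⟩ | ⟨v0, v1, v2, hv, b0, b1, b2, bd⟩ | ⟨c0, c1, c2⟩)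
    · by_cases h0 : s0 = 0 <;> by_cases h1 : s1 = 0 <;> by_cases h2 : s2 = 0
      · exact absurd hs (by rw [h0, h1, h2]; norm_num)
      · exact ⟨(2*m0*m1)^2, by rw [h0]; ring, by rw [h1]; ring, rfl⟩
      · exact ⟨(2*m0*m2)^2, by rw [h0]; ring, rfl, by rw [h2]; ring⟩
      · have q1 : m0+m2 = c' := mul_right_cancel₀ h1 a1
        have q2 : m0+m1 = c' := mul_right_cancel₀ h2 a2
        have hm : m1 = m2 := by linarith
        exact ⟨(2*m0*m2)^2, by rw [h0]; ring, rfl,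
          by linear_combination (4*m0^2*(m1+m2)*s2)*hm⟩
      · exact ⟨(2*m1*m2)^2, rfl, by rw [h1]; ring, by rw [h2]; ring⟩
      · have q0 : m1+m2 = c' := mul_right_cancel₀ h0 a0
        have q2 : m0+m1 = c' := mul_right_cancel₀ h2 a2
        have hm : m0 = m2 := by linarith
        exact ⟨(2*m1*m2)^2, rfl, by rw [h1]; ring,
          by linear_combination (4*m1^2*(m0+m2)*s2)*hm⟩
      · have q0 : m1+m2 = c' := mul_right_cancel₀ h0 a0
        have q1 : m0+m2 = c' := mul_right_cancel₀ h1 a1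
        have hm : m0 = m1 := by linarith
        exact ⟨(2*m1*m2)^2, rfl, by linear_combination (4*m2^2*(m0+m1)*s1)*hm,
          by rw [h2]; ring⟩
      · have q0 : m1+m2 = c' := mul_right_cancel₀ h0 a0
        have q1 : m0+m2 = c' := mul_right_cancel₀ h1 a1
        have q2 : m0+m1 = c' := mul_right_cancel₀ h2 a2
        have hm01 : m0 = m1 := by linarith
        have hm02 : m0 = m2 := by linarith
        exact ⟨(2*m1*m2)^2, rfl, by linear_combination (4*m2^2*(m0+m1)*s1)*hm01,
          by linear_combination (4*m1^2*(m0+m2)*s2)*hm02⟩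
    · by_cases k0 : v0 = 0 <;> by_cases k1 : v1 = 0 <;> by_cases k2 : v2 = 0
      · exact absurd ⟨k0, k1, k2⟩ hv
      · -- only v2 ≠ 0
        have l2 : m0+m1 = 0 := (mul_eq_zero.mp b2).resolve_right k2
        have hs2 : s2 = 0 := by
          have : s2 * v2 = 0 := by rw [k0, k1] at bd; linarith
          exact (mul_eq_zero.mp this).resolve_right k2
        exact ⟨(2*m1*m2)^2, rfl, by linear_combination (4*m2^2*(m0-m1)*s1)*l2,
          by rw [hs2]; ring⟩
      · -- only v1 ≠ 0
        have l1 : m0+m2 = 0 := (mul_eq_zero.mp b1).resolve_right k1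
        have hs1 : s1 = 0 := by
          have : s1 * v1 = 0 := by rw [k0, k2] at bd; linarith
          exact (mul_eq_zero.mp this).resolve_right k1
        exact ⟨(2*m1*m2)^2, rfl, by rw [hs1]; ring,
          by linear_combination (4*m1^2*(m0-m2)*s2)*l1⟩
      · -- v1, v2 ≠ 0
        have l1 : m0+m2 = 0 := (mul_eq_zero.mp b1).resolve_right k1
        have l2 : m0+m1 = 0 := (mul_eq_zero.mp b2).resolve_right k2
        have hm1 : m1 = -m0 := by linarith
        have hm2 : m2 = -m0 := by linarith
        subst hm1; subst hm2
        exact ⟨4*m0^4, by ring, by ring, by ring⟩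
      · -- only v0 ≠ 0
        have l0 : m1+m2 = 0 := (mul_eq_zero.mp b0).resolve_right k0
        have hs0 : s0 = 0 := by
          have : s0 * v0 = 0 := by rw [k1, k2] at bd; linarith
          exact (mul_eq_zero.mp this).resolve_right k0
        exact ⟨(2*m0*m2)^2, by rw [hs0]; ring, rfl,
          by linear_combination (4*m0^2*(m1-m2)*s2)*l0⟩
      · -- v0, v2 ≠ 0
        have l0 : m1+m2 = 0 := (mul_eq_zero.mp b0).resolve_right k0
        have l2 : m0+m1 = 0 := (mul_eq_zero.mp b2).resolve_right k2
        have hm0 : m0 = -m1 := by linarith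
        have hm2 : m2 = -m1 := by linarith
        subst hm0; subst hm2
        exact ⟨4*m1^4, by ring, by ring, by ring⟩
      · -- v0, v1 ≠ 0
        have l0 : m1+m2 = 0 := (mul_eq_zero.mp b0).resolve_right k0
        have l1 : m0+m2 = 0 := (mul_eq_zero.mp b1).resolve_right k1
        have hm0 : m0 = -m2 := by linarith
        have hm1 : m1 = -m2 := by linarith
        subst hm0; subst hm1
        exact ⟨4*m2^4, by ring, by ring, by ring⟩
      · -- all nonzero
        have l0 : m1+m2 = 0 := (mul_eq_zero.mp b0).resolve_right k0
        have l1 : m0+m2 = 0 := (mul_eq_zero.mp b1).resolve_right k1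
        have hm0 : m0 = -m2 := by linarith
        have hm1 : m1 = -m2 := by linarith
        subst hm0; subst hm1
        exact ⟨4*m2^4, by ring, by ring, by ring⟩
    · exact ⟨0, by linear_combination (2*m1*m2)*c0, by linear_combination (2*m0*m2)*c1,
        by linear_combination (2*m0*m1)*c2⟩

/-- For a unit vector `σ`, with Milnor numbers `μᵢ = (λ₁+λ₂+λ₃)/2 − λᵢ` and principal Ricci
curvatures `ρ₁ = 2μ₂μ₃`, `ρ₂ = 2μ₁μ₃`, `ρ₃ = 2μ₁μ₂`: `σ` is an eigenvector of the squared
Ricci endomorphism iff (a) `σ` is a principal structure direction, or (b) `σ` lies in a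
2-dimensional subalgebra, or (c) `σ` is Ricci-flat. -/
theorem two_harmonic_unit_classification (lam μ ρ : Fin 3 → ℝ)
    (hμ : ∀ i, μ i = (lam 0 + lam 1 + lam 2) / 2 - lam i)
    (hρ : ρ = ![2 * μ 1 * μ 2, 2 * μ 0 * μ 2, 2 * μ 0 * μ 1])
    (σ : Fin 3 → ℝ) (hσ : σ ⬝ᵥ σ = 1) :
    (∃ c : ℝ, ∀ i, ρ i ^ 2 * σ i = c * σ i) ↔
      ((∃ c' : ℝ, ∀ i, lam i * σ i = c' * σ i) ∨
       (∃ v : Fin 3 → ℝ, v ≠ 0 ∧ (∀ i, lam i * v i = 0) ∧ σ ⬝ᵥ v = 0) ∨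
       (∀ i, ρ i * σ i = 0)) := by
  have hμ0 := hμ 0; have hμ1 := hμ 1; have hμ2 := hμ 2
  have hl0 : lam 0 = μ 1 + μ 2 := by linarith
  have hl1 : lam 1 = μ 0 + μ 2 := by linarith
  have hl2 : lam 2 = μ 0 + μ 1 := by linarith
  have hρ0 : ρ 0 = 2 * μ 1 * μ 2 := by rw [hρ]; rfl
  have hρ1 : ρ 1 = 2 * μ 0 * μ 2 := by rw [hρ]; rfl
  have hρ2 : ρ 2 = 2 * μ 0 * μ 1 := by rw [hρ]; rfl
  have hs : σ 0 ^ 2 + σ 1 ^ 2 + σ 2 ^ 2 = 1 := by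
    simp only [dotProduct, Fin.sum_univ_three] at hσ
    linear_combination hσ
  have key := aux (μ 0) (μ 1) (μ 2) (σ 0) (σ 1) (σ 2) hs
  constructor
  · rintro ⟨c, hc⟩
    have h0 := hc 0; have h1 := hc 1; have h2 := hc 2
    rw [hρ0] at h0; rw [hρ1] at h1; rw [hρ2] at h2
    rcases key.mp ⟨c, h0, h1, h2⟩ with ⟨c', d0, d1, d2⟩ | ⟨v0, v1, v2, hv, b0, b1, b2, bd⟩ |
      ⟨d0, d1, d2⟩
    · refine Or.inl ⟨c', fun i => ?_⟩
      fin_cases i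
      · show lam 0 * σ 0 = c' * σ 0; rw [hl0]; exact d0
      · show lam 1 * σ 1 = c' * σ 1; rw [hl1]; exact d1
      · show lam 2 * σ 2 = c' * σ 2; rw [hl2]; exact d2
    · refine Or.inr (Or.inl ⟨![v0, v1, v2], ?_, ?_, ?_⟩)
      · intro h
        refine hv ⟨?_, ?_, ?_⟩
        · have := congrFun h 0; simpa using this
        · have := congrFun h 1; simpa using this
        · have := congrFun h 2; simpa using this
      · intro i
        fin_cases i
        · show lam 0 * v0 = 0; rw [hl0]; exact b0
        · show lam 1 * v1 = 0; rw [hl1]; exact b1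
        · show lam 2 * v2 = 0; rw [hl2]; exact b2
      · show σ ⬝ᵥ ![v0, v1, v2] = 0
        simp only [dotProduct, Fin.sum_univ_three, Matrix.cons_val_zero,
          Matrix.cons_val_one, Matrix.head_cons, Matrix.cons_val_two, Matrix.tail_cons]
        linear_combination bd
    · refine Or.inr (Or.inr fun i => ?_)
      fin_cases i
      · show ρ 0 * σ 0 = 0; rw [hρ0]; exact d0
      · show ρ 1 * σ 1 = 0; rw [hρ1]; exact d1
      · show ρ 2 * σ 2 = 0; rw [hρ2]; exact d2
  · rintro (⟨c', hc⟩ | ⟨v, hvne, hvl, hvd⟩ | hr)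
    · have d0 := hc 0; have d1 := hc 1; have d2 := hc 2
      rw [hl0] at d0; rw [hl1] at d1; rw [hl2] at d2
      obtain ⟨c, e0, e1, e2⟩ := key.mpr (Or.inl ⟨c', d0, d1, d2⟩)
      refine ⟨c, fun i => ?_⟩
      fin_cases i
      · show ρ 0 ^ 2 * σ 0 = c * σ 0; rw [hρ0]; exact e0
      · show ρ 1 ^ 2 * σ 1 = c * σ 1; rw [hρ1]; exact e1
      · show ρ 2 ^ 2 * σ 2 = c * σ 2; rw [hρ2]; exact e2
    · have b0 := hvl 0; have b1 := hvl 1; have b2 := hvl 2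
      rw [hl0] at b0; rw [hl1] at b1; rw [hl2] at b2
      have hv3 : ¬(v 0 = 0 ∧ v 1 = 0 ∧ v 2 = 0) := by
        rintro ⟨z0, z1, z2⟩
        apply hvne
        funext i
        fin_cases i <;> assumption
      have bd : σ 0 * v 0 + σ 1 * v 1 + σ 2 * v 2 = 0 := by
        simp only [dotProduct, Fin.sum_univ_three] at hvd
        linear_combination hvd
      obtain ⟨c, e0, e1, e2⟩ := key.mpr (Or.inr (Or.inl ⟨v 0, v 1, v 2, hv3, b0, b1, b2, bd⟩))
      refine ⟨c, fun i => ?_⟩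
      fin_cases i
      · show ρ 0 ^ 2 * σ 0 = c * σ 0; rw [hρ0]; exact e0
      · show ρ 1 ^ 2 * σ 1 = c * σ 1; rw [hρ1]; exact e1
      · show ρ 2 ^ 2 * σ 2 = c * σ 2; rw [hρ2]; exact e2
    · have r0 := hr 0; have r1 := hr 1; have r2 := hr 2
      rw [hρ0] at r0; rw [hρ1] at r1; rw [hρ2] at r2
      obtain ⟨c, e0, e1, e2⟩ := key.mpr (Or.inr (Or.inr ⟨r0, r1, r2⟩))
      refine ⟨c, fun i => ?_⟩
      fin_cases i
      · show ρ 0 ^ 2 * σ 0 = c * σ 0; rw [hρ0]; exact e0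
      · show ρ 1 ^ 2 * σ 1 = c * σ 1; rw [hρ1]; exact e1
      · show ρ 2 ^ 2 * σ 2 = c * σ 2; rw [hρ2]; exact e2
end

section
/- Let λ = (λ₁, λ₂, λ₃) ∈ ℝ³ and define μ_i = (λ₁+λ₂+λ₃)/2 − λ_i for i = 1,2,3. Let σ ∈ ℝ³ with |σ| = 1. Then there exists c ∈ ℝ with μ_i²σ_i = cσ_i for i = 1,2,3 if and only if at least one of the following holds: (a) there exists c′ ∈ ℝ with λ_iσ_i = c′σ_i for all i; (b) there exists a nonzero v ∈ ℝ³ with λ_i v_i = 0 for all i and ⟨σ, v⟩ = 0. -/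
open Matrix

theorem fin3_forall {P : Fin 3 → Prop} (h0 : P 0) (h1 : P 1) (h2 : P 2) : ∀ i, P i := by
  intro i
  fin_cases i
  · exact h0
  · exact h1
  · exact h2

/-- For a unit vector `σ`, with Milnor numbers `μᵢ = (λ₁+λ₂+λ₃)/2 − λᵢ`: `σ` is an
eigenvector of the squared Milnor map iff (a) `σ` is a principal structure direction, or
(b) `σ` lies in a 2-dimensional subalgebra. -/
theorem harmonic_unit_classification (lam μ : Fin 3 → ℝ)
    (hμ : ∀ i, μ i = (lam 0 + lam 1 + lam 2) / 2 - lam i)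
    (σ : Fin 3 → ℝ) (hσ : σ ⬝ᵥ σ = 1) :
    (∃ c : ℝ, ∀ i, μ i ^ 2 * σ i = c * σ i) ↔
      ((∃ c' : ℝ, ∀ i, lam i * σ i = c' * σ i) ∨
       (∃ v : Fin 3 → ℝ, v ≠ 0 ∧ (∀ i, lam i * v i = 0) ∧ σ ⬝ᵥ v = 0)) := by
  simp only [dotProduct, Fin.sum_univ_three] at hσ
  constructor
  · rintro ⟨c, hc⟩
    have h0 := hc 0; have h1 := hc 1; have h2 := hc 2
    rw [hμ 0] at h0; rw [hμ 1] at h1; rw [hμ 2] at h2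
    by_cases s0 : σ 0 = 0
    · by_cases s1 : σ 1 = 0
      · left
        exact ⟨lam 2, fin3_forall (by rw [s0]; ring) (by rw [s1]; ring) rfl⟩
      · by_cases s2 : σ 2 = 0
        · left
          exact ⟨lam 1, fin3_forall (by rw [s0]; ring) rfl (by rw [s2]; ring)⟩
        · -- support = {1,2}
          have e1 : ((lam 0 + lam 1 + lam 2) / 2 - lam 1) ^ 2 = c :=
            mul_right_cancel₀ s1 h1
          have e2 : ((lam 0 + lam 1 + lam 2) / 2 - lam 2) ^ 2 = c :=
            mul_right_cancel₀ s2 h2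
          have key : lam 0 * (lam 2 - lam 1) = 0 := by linear_combination e1 - e2
          by_cases e12 : lam 1 = lam 2
          · left
            exact ⟨lam 1, fin3_forall (by rw [s0]; ring) rfl (by rw [e12])⟩
          · right
            have hl0 : lam 0 = 0 := by
              rcases mul_eq_zero.mp key with h | h
              · exact h
              · exact absurd (by linarith) e12
            refine ⟨![1, 0, 0], by intro h; simpa using congrFun h 0, ?_, ?_⟩
            · exact fin3_forall (by simp [hl0]) (by simp) (by simp)
            · simp [dotProduct, Fin.sum_univ_three, s0]
    · by_cases s1 : σ 1 = 0
      · by_cases s2 : σ 2 = 0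
        · left
          exact ⟨lam 0, fin3_forall rfl (by rw [s1]; ring) (by rw [s2]; ring)⟩
        · -- support = {0,2}
          have e0 : ((lam 0 + lam 1 + lam 2) / 2 - lam 0) ^ 2 = c :=
            mul_right_cancel₀ s0 h0
          have e2 : ((lam 0 + lam 1 + lam 2) / 2 - lam 2) ^ 2 = c :=
            mul_right_cancel₀ s2 h2
          have key : lam 1 * (lam 2 - lam 0) = 0 := by linear_combination e0 - e2
          by_cases e02 : lam 0 = lam 2
          · left
            exact ⟨lam 0, fin3_forall rfl (by rw [s1]; ring) (by rw [e02])⟩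
          · right
            have hl1 : lam 1 = 0 := by
              rcases mul_eq_zero.mp key with h | h
              · exact h
              · exact absurd (by linarith) e02
            refine ⟨![0, 1, 0], by intro h; simpa using congrFun h 1, ?_, ?_⟩
            · exact fin3_forall (by simp) (by simp [hl1]) (by simp)
            · simp [dotProduct, Fin.sum_univ_three, s1]
      · by_cases s2 : σ 2 = 0
        · -- support = {0,1}
          have e0 : ((lam 0 + lam 1 + lam 2) / 2 - lam 0) ^ 2 = c :=
            mul_right_cancel₀ s0 h0
          have e1 : ((lam 0 + lam 1 + lam 2) / 2 - lam 1) ^ 2 = c :=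
            mul_right_cancel₀ s1 h1
          have key : lam 2 * (lam 1 - lam 0) = 0 := by linear_combination e0 - e1
          by_cases e01 : lam 0 = lam 1
          · left
            exact ⟨lam 0, fin3_forall rfl (by rw [← e01]) (by rw [s2]; ring)⟩
          · right
            have hl2 : lam 2 = 0 := by
              rcases mul_eq_zero.mp key with h | h
              · exact h
              · exact absurd (by linarith) e01
            refine ⟨![0, 0, 1], by intro h; simpa using congrFun h 2, ?_, ?_⟩
            · exact fin3_forall (by simp) (by simp) (by simp [hl2])
            · simp [dotProduct, Fin.sum_univ_three, s2]
        · -- full support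
          have e0 : ((lam 0 + lam 1 + lam 2) / 2 - lam 0) ^ 2 = c :=
            mul_right_cancel₀ s0 h0
          have e1 : ((lam 0 + lam 1 + lam 2) / 2 - lam 1) ^ 2 = c :=
            mul_right_cancel₀ s1 h1
          have e2 : ((lam 0 + lam 1 + lam 2) / 2 - lam 2) ^ 2 = c :=
            mul_right_cancel₀ s2 h2
          have K2 : lam 2 * (lam 1 - lam 0) = 0 := by linear_combination e0 - e1
          have K0 : lam 0 * (lam 2 - lam 1) = 0 := by linear_combination e1 - e2
          by_cases e01 : lam 0 = lam 1
          · by_cases e12 : lam 1 = lam 2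
            · left
              exact ⟨lam 0, fin3_forall rfl (by rw [← e01]) (by rw [e01, e12])⟩
            · have hl0 : lam 0 = 0 := by
                rcases mul_eq_zero.mp K0 with h | h
                · exact h
                · exact absurd (by linarith) e12
              have hl1 : lam 1 = 0 := e01 ▸ hl0
              right
              refine ⟨![σ 1, -σ 0, 0], by intro h; simpa [s1] using congrFun h 0, ?_, ?_⟩
              · exact fin3_forall (by simp [hl0]) (by simp [hl1]) (by simp)
              · simp only [dotProduct, Fin.sum_univ_three, Matrix.cons_val_zero,
                  Matrix.cons_val_one, Matrix.head_cons, Matrix.cons_val_two, Matrix.tail_cons]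
                ring
          · have hl2 : lam 2 = 0 := by
              rcases mul_eq_zero.mp K2 with h | h
              · exact h
              · exact absurd (by linarith) e01
            have h01 : lam 0 * lam 1 = 0 := by
              rw [hl2] at K0; linarith [K0]
            right
            rcases mul_eq_zero.mp h01 with hl0 | hl1
            · refine ⟨![σ 2, 0, -σ 0], by intro h; simpa [s2] using congrFun h 0, ?_, ?_⟩
              · exact fin3_forall (by simp [hl0]) (by simp) (by simp [hl2])
              · simp only [dotProduct, Fin.sum_univ_three, Matrix.cons_val_zero,
                  Matrix.cons_val_one, Matrix.head_cons, Matrix.cons_val_two, Matrix.tail_cons]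
                ring
            · refine ⟨![0, σ 2, -σ 1], by intro h; simpa [s2] using congrFun h 1, ?_, ?_⟩
              · exact fin3_forall (by simp) (by simp [hl1]) (by simp [hl2])
              · simp only [dotProduct, Fin.sum_univ_three, Matrix.cons_val_zero,
                  Matrix.cons_val_one, Matrix.head_cons, Matrix.cons_val_two, Matrix.tail_cons]
                ring
  · rintro (⟨c', hc'⟩ | ⟨v, hv0, hv1, hv2⟩)
    · refine ⟨((lam 0 + lam 1 + lam 2) / 2 - c') ^ 2, fun i => ?_⟩
      rw [hμ i]
      by_cases h : σ i = 0
      · rw [h]; ring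
      · have : lam i = c' := mul_right_cancel₀ h (hc' i)
        rw [this]
    · simp only [dotProduct, Fin.sum_univ_three] at hv2
      obtain ⟨j, hj⟩ := Function.ne_iff.mp hv0
      have hlj : lam j = 0 := by
        rcases mul_eq_zero.mp (hv1 j) with h | h
        · exact h
        · exact absurd h (by simpa using hj)
      fin_cases j
      · -- lam 0 = 0
        have hL : lam 0 = 0 := hlj
        have hV : v 0 ≠ 0 := by simpa using hj
        by_cases hkl : lam 1 * lam 2 = 0
        · refine ⟨((lam 1 - lam 2) / 2) ^ 2, ?_⟩
          refine fin3_forall ?_ ?_ ?_ <;> rw [hμ _] <;> rw [hL]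
          · linear_combination σ 0 * hkl
          · ring
          · ring
        · have hl1 : lam 1 ≠ 0 := fun h => hkl (by rw [h]; ring)
          have hl2 : lam 2 ≠ 0 := fun h => hkl (by rw [h]; ring)
          have hv1' : v 1 = 0 := by
            rcases mul_eq_zero.mp (hv1 1) with h | h
            · exact absurd h hl1
            · exact h
          have hv2' : v 2 = 0 := by
            rcases mul_eq_zero.mp (hv1 2) with h | h
            · exact absurd h hl2
            · exact h
          have hs0 : σ 0 = 0 := by
            rw [hv1', hv2'] at hv2
            have h : σ 0 * v 0 = 0 := by linarith
            rcases mul_eq_zero.mp h with h | h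
            · exact h
            · exact absurd h hV
          refine ⟨((lam 1 - lam 2) / 2) ^ 2, ?_⟩
          refine fin3_forall ?_ ?_ ?_ <;> rw [hμ _]
          · rw [hs0]; ring
          · rw [hL]; ring
          · rw [hL]; ring
      · -- lam 1 = 0
        have hL : lam 1 = 0 := hlj
        have hV : v 1 ≠ 0 := by simpa using hj
        by_cases hkl : lam 0 * lam 2 = 0
        · refine ⟨((lam 0 - lam 2) / 2) ^ 2, ?_⟩
          refine fin3_forall ?_ ?_ ?_ <;> rw [hμ _] <;> rw [hL]
          · ring
          · linear_combination σ 1 * hkl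
          · ring
        · have hl0 : lam 0 ≠ 0 := fun h => hkl (by rw [h]; ring)
          have hl2 : lam 2 ≠ 0 := fun h => hkl (by rw [h]; ring)
          have hv0' : v 0 = 0 := by
            rcases mul_eq_zero.mp (hv1 0) with h | h
            · exact absurd h hl0
            · exact h
          have hv2' : v 2 = 0 := by
            rcases mul_eq_zero.mp (hv1 2) with h | h
            · exact absurd h hl2
            · exact h
          have hs1 : σ 1 = 0 := by
            rw [hv0', hv2'] at hv2
            have h : σ 1 * v 1 = 0 := by linarith
            rcases mul_eq_zero.mp h with h | h
            · exact h
            · exact absurd h hV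
          refine ⟨((lam 0 - lam 2) / 2) ^ 2, ?_⟩
          refine fin3_forall ?_ ?_ ?_ <;> rw [hμ _]
          · rw [hL]; ring
          · rw [hs1]; ring
          · rw [hL]; ring
      · -- lam 2 = 0
        have hL : lam 2 = 0 := hlj
        have hV : v 2 ≠ 0 := by simpa using hj
        by_cases hkl : lam 0 * lam 1 = 0
        · refine ⟨((lam 0 - lam 1) / 2) ^ 2, ?_⟩
          refine fin3_forall ?_ ?_ ?_ <;> rw [hμ _] <;> rw [hL]
          · ring
          · ring
          · linear_combination σ 2 * hkl
        · have hl0 : lam 0 ≠ 0 := fun h => hkl (by rw [h]; ring)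
          have hl1 : lam 1 ≠ 0 := fun h => hkl (by rw [h]; ring)
          have hv0' : v 0 = 0 := by
            rcases mul_eq_zero.mp (hv1 0) with h | h
            · exact absurd h hl0
            · exact h
          have hv1' : v 1 = 0 := by
            rcases mul_eq_zero.mp (hv1 1) with h | h
            · exact absurd h hl1
            · exact h
          have hs2 : σ 2 = 0 := by
            rw [hv0', hv1'] at hv2
            have h : σ 2 * v 2 = 0 := by linarith
            rcases mul_eq_zero.mp h with h | h
            · exact h
            · exact absurd h hV
          refine ⟨((lam 0 - lam 1) / 2) ^ 2, ?_⟩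
          refine fin3_forall ?_ ?_ ?_ <;> rw [hμ _]
          · rw [hL]; ring
          · rw [hL]; ring
          · rw [hs2]; ring
end

section
/- Let μ = (μ₁, μ₂, μ₃) ∈ ℝ³ and set ρ₁ = 2μ₂μ₃, ρ₂ = 2μ₁μ₃, ρ₃ = 2μ₁μ₂. Let σ ∈ ℝ³ be nonzero. Then there exists c ∈ ℝ with ρ_i²σ_i = cσ_i for i = 1,2,3 if and only if either there exists c′ ∈ ℝ with μ_i²σ_i = c′σ_i for all i, or ρ_iσ_i = 0 for all i. -/
private lemma sq0 {a : ℝ} (h : a ^ 2 = 0) : a = 0 :=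
  pow_eq_zero_iff (by norm_num) |>.mp h

lemma key (a b c s0 s1 s2 : ℝ) (hne : ¬(s0 = 0 ∧ s1 = 0 ∧ s2 = 0)) :
    (∃ k : ℝ, (2*b*c)^2*s0 = k*s0 ∧ (2*a*c)^2*s1 = k*s1 ∧ (2*a*b)^2*s2 = k*s2) ↔
    ((∃ k : ℝ, a^2*s0 = k*s0 ∧ b^2*s1 = k*s1 ∧ c^2*s2 = k*s2) ∨
      (2*b*c*s0 = 0 ∧ 2*a*c*s1 = 0 ∧ 2*a*b*s2 = 0)) := by
  by_cases h0 : s0 = 0 <;> by_cases h1 : s1 = 0 <;> by_cases h2 : s2 = 0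
  · exact absurd ⟨h0, h1, h2⟩ hne
  -- {2}
  · subst h0 h1
    constructor
    · intro _; left; exact ⟨c^2, by ring, by ring, by ring⟩
    · intro _; exact ⟨(2*a*b)^2, by ring, by ring, by ring⟩
  -- {1}
  · subst h0 h2
    constructor
    · intro _; left; exact ⟨b^2, by ring, by ring, by ring⟩
    · intro _; exact ⟨(2*a*c)^2, by ring, by ring, by ring⟩
  -- {1,2}
  · subst h0
    constructor
    · rintro ⟨k, -, e2, e3⟩
      have e2' : (2*a*c)^2 = k := mul_right_cancel₀ h1 e2
      have e3' : (2*a*b)^2 = k := mul_right_cancel₀ h2 e3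
      have hd : a^2*(c^2 - b^2) = 0 := by linear_combination (e2' - e3')/4
      rcases mul_eq_zero.mp hd with ha | hbc
      · have ha : a = 0 := sq0 ha
        right; exact ⟨by ring, by rw [ha]; ring, by rw [ha]; ring⟩
      · left; exact ⟨b^2, by ring, by ring, by linear_combination s2 * hbc⟩
    · rintro (⟨k, -, e2, e3⟩ | ⟨-, e2, e3⟩)
      · have e2' : b^2 = k := mul_right_cancel₀ h1 e2
        have e3' : c^2 = k := mul_right_cancel₀ h2 e3
        exact ⟨4*a^2*k, by ring, by linear_combination 4*a^2*s1*e3',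
          by linear_combination 4*a^2*s2*e2'⟩
      · have e2' : a*c = 0 := by
          rcases mul_eq_zero.mp e2 with h | h
          · linarith
          · exact absurd h h1
        have e3' : a*b = 0 := by
          rcases mul_eq_zero.mp e3 with h | h
          · linarith
          · exact absurd h h2
        exact ⟨0, by ring, by linear_combination 4*a*c*s1*e2',
          by linear_combination 4*a*b*s2*e3'⟩
  -- {0}
  · subst h1 h2
    constructor
    · intro _; left; exact ⟨a^2, by ring, by ring, by ring⟩
    · intro _; exact ⟨(2*b*c)^2, by ring, by ring, by ring⟩
  -- {0,2}
  · subst h1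
    constructor
    · rintro ⟨k, e1, -, e3⟩
      have e1' : (2*b*c)^2 = k := mul_right_cancel₀ h0 e1
      have e3' : (2*a*b)^2 = k := mul_right_cancel₀ h2 e3
      have hd : b^2*(c^2 - a^2) = 0 := by linear_combination (e1' - e3')/4
      rcases mul_eq_zero.mp hd with hb | hca
      · have hb : b = 0 := sq0 hb
        right; exact ⟨by rw [hb]; ring, by ring, by rw [hb]; ring⟩
      · left; exact ⟨a^2, by ring, by ring, by linear_combination s2 * hca⟩
    · rintro (⟨k, e1, -, e3⟩ | ⟨e1, -, e3⟩)
      · have e1' : a^2 = k := mul_right_cancel₀ h0 e1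
        have e3' : c^2 = k := mul_right_cancel₀ h2 e3
        exact ⟨4*b^2*k, by linear_combination 4*b^2*s0*e3', by ring,
          by linear_combination 4*b^2*s2*e1'⟩
      · have e1' : b*c = 0 := by
          rcases mul_eq_zero.mp e1 with h | h
          · linarith
          · exact absurd h h0
        have e3' : a*b = 0 := by
          rcases mul_eq_zero.mp e3 with h | h
          · linarith
          · exact absurd h h2
        exact ⟨0, by linear_combination 4*b*c*s0*e1', by ring,
          by linear_combination 4*a*b*s2*e3'⟩
  -- {0,1}
  · subst h2
    constructor
    · rintro ⟨k, e1, e2, -⟩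
      have e1' : (2*b*c)^2 = k := mul_right_cancel₀ h0 e1
      have e2' : (2*a*c)^2 = k := mul_right_cancel₀ h1 e2
      have hd : c^2*(b^2 - a^2) = 0 := by linear_combination (e1' - e2')/4
      rcases mul_eq_zero.mp hd with hc | hba
      · have hc : c = 0 := sq0 hc
        right; exact ⟨by rw [hc]; ring, by rw [hc]; ring, by ring⟩
      · left; exact ⟨a^2, by ring, by linear_combination s1 * hba, by ring⟩
    · rintro (⟨k, e1, e2, -⟩ | ⟨e1, e2, -⟩)
      · have e1' : a^2 = k := mul_right_cancel₀ h0 e1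
        have e2' : b^2 = k := mul_right_cancel₀ h1 e2
        exact ⟨4*c^2*k, by linear_combination 4*c^2*s0*e2',
          by linear_combination 4*c^2*s1*e1', by ring⟩
      · have e1' : b*c = 0 := by
          rcases mul_eq_zero.mp e1 with h | h
          · linarith
          · exact absurd h h0
        have e2' : a*c = 0 := by
          rcases mul_eq_zero.mp e2 with h | h
          · linarith
          · exact absurd h h1
        exact ⟨0, by linear_combination 4*b*c*s0*e1',
          by linear_combination 4*a*c*s1*e2', by ring⟩
  -- {0,1,2}
  · constructor
    · rintro ⟨k, e1, e2, e3⟩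
      have e1' : (2*b*c)^2 = k := mul_right_cancel₀ h0 e1
      have e2' : (2*a*c)^2 = k := mul_right_cancel₀ h1 e2
      have e3' : (2*a*b)^2 = k := mul_right_cancel₀ h2 e3
      by_cases ha : a = 0
      · -- k = 0, and b*c = 0
        have hk : k = 0 := by rw [← e2', ha]; ring
        have hbc : b*c = 0 := by
          have : (2*b*c)^2 = 0 := by rw [e1', hk]
          have := sq0 this; linarith
        right
        exact ⟨by linear_combination 2*s0*hbc, by rw [ha]; ring, by rw [ha]; ring⟩
      · by_cases hb : b = 0
        · have hk : k = 0 := by rw [← e1', hb]; ring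
          have hac : a*c = 0 := by
            have : (2*a*c)^2 = 0 := by rw [e2', hk]
            have := sq0 this; linarith
          right
          exact ⟨by rw [hb]; ring, by linear_combination 2*s1*hac, by rw [hb]; ring⟩
        · by_cases hc : c = 0
          · have hk : k = 0 := by rw [← e1', hc]; ring
            have hab : a*b = 0 := by
              have : (2*a*b)^2 = 0 := by rw [e3', hk]
              have := sq0 this; linarith
            rcases mul_eq_zero.mp hab with h | h
            · exact absurd h ha
            · exact absurd h hb
          · -- all nonzero
            have hba : c^2*(b^2 - a^2) = 0 := by linear_combination (e1' - e2')/4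
            have hcb : a^2*(c^2 - b^2) = 0 := by linear_combination (e2' - e3')/4
            have hba' : b^2 = a^2 := by
              rcases mul_eq_zero.mp hba with h | h
              · exact absurd (sq0 h) hc
              · linarith
            have hcb' : c^2 = b^2 := by
              rcases mul_eq_zero.mp hcb with h | h
              · exact absurd (sq0 h) ha
              · linarith
            left
            exact ⟨a^2, by ring, by rw [hba'], by rw [hcb', hba']⟩
    · rintro (⟨k, e1, e2, e3⟩ | ⟨e1, e2, e3⟩)
      · have e1' : a^2 = k := mul_right_cancel₀ h0 e1
        have e2' : b^2 = k := mul_right_cancel₀ h1 e2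
        have e3' : c^2 = k := mul_right_cancel₀ h2 e3
        exact ⟨4*k^2, by linear_combination 4*c^2*s0*e2' + 4*k*s0*e3',
          by linear_combination 4*c^2*s1*e1' + 4*k*s1*e3',
          by linear_combination 4*b^2*s2*e1' + 4*k*s2*e2'⟩
      · have e1' : b*c = 0 := by
          rcases mul_eq_zero.mp e1 with h | h
          · linarith
          · exact absurd h h0
        have e2' : a*c = 0 := by
          rcases mul_eq_zero.mp e2 with h | h
          · linarith
          · exact absurd h h1
        have e3' : a*b = 0 := by
          rcases mul_eq_zero.mp e3 with h | h
          · linarith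
          · exact absurd h h2
        exact ⟨0, by linear_combination 4*b*c*s0*e1',
          by linear_combination 4*a*c*s1*e2', by linear_combination 4*a*b*s2*e3'⟩

/-- With principal Ricci curvatures `ρ₁ = 2μ₂μ₃`, `ρ₂ = 2μ₁μ₃`, `ρ₃ = 2μ₁μ₂`: a nonzero `σ`
is an eigenvector of the squared Ricci endomorphism iff it is an eigenvector of the squared
Milnor map or is Ricci-flat (the identity `ℋ₂ = ℋ₁ ∪ 𝒵₂`). -/
theorem two_harmonic_eq_harmonic_union_ricciflat (μ ρ : Fin 3 → ℝ)
    (hρ : ρ = ![2 * μ 1 * μ 2, 2 * μ 0 * μ 2, 2 * μ 0 * μ 1])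
    (σ : Fin 3 → ℝ) (hσ : σ ≠ 0) :
    (∃ c : ℝ, ∀ i, ρ i ^ 2 * σ i = c * σ i) ↔
      ((∃ c' : ℝ, ∀ i, μ i ^ 2 * σ i = c' * σ i) ∨ (∀ i, ρ i * σ i = 0)) := by
  subst hρ
  have h3 : ∀ P : Fin 3 → Prop, (∀ i, P i) ↔ P 0 ∧ P 1 ∧ P 2 :=
    fun P => ⟨fun h => ⟨h 0, h 1, h 2⟩, fun ⟨a, b, c⟩ i => by fin_cases i <;> assumption⟩
  have hne : ¬(σ 0 = 0 ∧ σ 1 = 0 ∧ σ 2 = 0) := by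
    rintro ⟨a, b, c⟩
    exact hσ (funext fun i => by fin_cases i <;> assumption)
  simp only [h3, Matrix.cons_val_zero, Matrix.cons_val_one, Matrix.head_cons,
    Matrix.cons_val_two, Matrix.tail_cons]
  exact key (μ 0) (μ 1) (μ 2) (σ 0) (σ 1) (σ 2) hne
end

section
/- Let μ = (μ₁, μ₂, μ₃) ∈ ℝ³, let c > 0, and define η₁ = μ₁² − cμ₂²μ₃², η₂ = μ₂² − cμ₁²μ₃², η₃ = μ₃² − cμ₁²μ₂². Let σ ∈ ℝ³ be nonzero. Then there exists t ∈ ℝ with η_iσ_i = tσ_i for i = 1,2,3 if and only if there exists t′ ∈ ℝ with μ_i²σ_i = t′σ_i for i = 1,2,3. -/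
/-! With `aᵢ = μᵢ²` and `{i, j, k} = {1, 2, 3}` one has `ηᵢ - ηⱼ = (aᵢ - aⱼ)(1 + c aₖ)`, and
the second factor is positive. Hence `η` and `μ²` identify exactly the same pairs of indices, and
`σ` is an eigenvector of a diagonal map precisely when the diagonal is constant on the support
of `σ`. -/

section Diagonal

variable {ι R : Type*} [CommRing R] [NoZeroDivisors R]

theorem exists_forall_mul_eq_mul_iff (f σ : ι → R) :
    (∃ t, ∀ i, f i * σ i = t * σ i) ↔ ∀ i j, σ i ≠ 0 → σ j ≠ 0 → f i = f j := by
  simp only [mul_eq_mul_right_iff]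
  constructor
  · rintro ⟨t, ht⟩ i j hi hj
    rw [(ht i).resolve_right hi, (ht j).resolve_right hj]
  · intro h
    by_cases hσ : ∃ i₀, σ i₀ ≠ 0
    · obtain ⟨i₀, hi₀⟩ := hσ
      exact ⟨f i₀, fun i => or_iff_not_imp_right.mpr fun hi => h i i₀ hi hi₀⟩
    · push Not at hσ
      exact ⟨0, fun i => Or.inr (hσ i)⟩

theorem exists_forall_mul_eq_mul_congr {f g : ι → R} (hfg : ∀ i j, f i = f j ↔ g i = g j)
    (σ : ι → R) :
    (∃ t, ∀ i, f i * σ i = t * σ i) ↔ ∃ t, ∀ i, g i * σ i = t * σ i := by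
  simp only [exists_forall_mul_eq_mul_iff, hfg]

end Diagonal

-- For `i ≠ j` in `Fin 3`, `-(i + j)` is the remaining index.
theorem vec_sub_vec_eq_sq_sub_sq_mul (μ : Fin 3 → ℝ) (c : ℝ) (i j : Fin 3) :
    ![μ 0 ^ 2 - c * μ 1 ^ 2 * μ 2 ^ 2,
        μ 1 ^ 2 - c * μ 0 ^ 2 * μ 2 ^ 2,
        μ 2 ^ 2 - c * μ 0 ^ 2 * μ 1 ^ 2] i -
      ![μ 0 ^ 2 - c * μ 1 ^ 2 * μ 2 ^ 2,
        μ 1 ^ 2 - c * μ 0 ^ 2 * μ 2 ^ 2,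
        μ 2 ^ 2 - c * μ 0 ^ 2 * μ 1 ^ 2] j =
      (μ i ^ 2 - μ j ^ 2) * (1 + c * μ (-(i + j)) ^ 2) := by
  fin_cases i <;> fin_cases j <;>
    simp only [Fin.isValue, Fin.zero_eta, Fin.mk_one, Fin.reduceFinMk, Fin.reduceAdd,
      Matrix.cons_val_zero, Matrix.cons_val_one, Matrix.cons_val, sub_self, add_zero, zero_add,
      neg_zero, zero_mul, show (-1 : Fin 3) = 2 from rfl, show (-2 : Fin 3) = 1 from rfl] <;> ring

theorem twisted_skyrmion_iff_harmonic_general (μ : Fin 3 → ℝ) (c : ℝ) (hc : 0 < c)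
    (η : Fin 3 → ℝ)
    (hη : η = ![μ 0 ^ 2 - c * μ 1 ^ 2 * μ 2 ^ 2,
                μ 1 ^ 2 - c * μ 0 ^ 2 * μ 2 ^ 2,
                μ 2 ^ 2 - c * μ 0 ^ 2 * μ 1 ^ 2])
    (σ : Fin 3 → ℝ) :
    (∃ t : ℝ, ∀ i, η i * σ i = t * σ i) ↔
      (∃ t' : ℝ, ∀ i, μ i ^ 2 * σ i = t' * σ i) := by
  refine exists_forall_mul_eq_mul_congr (fun i j => ?_) σ
  have hpos : 0 < 1 + c * μ (-(i + j)) ^ 2 := by positivity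
  rw [← sub_eq_zero, hη, vec_sub_vec_eq_sq_sub_sq_mul, mul_eq_zero, sub_eq_zero,
    or_iff_left hpos.ne']

/-- With `ηᵢ = μᵢ² − c·μⱼ²μ_k²` for a positive coupling constant `c`: a nonzero `σ` is an
eigenvector of the diagonal map with entries `ηᵢ` (i.e. a twisted 2-skyrmion) iff it is an
eigenvector of the squared Milnor map (i.e. a harmonic unit vector field). -/
theorem twisted_skyrmion_iff_harmonic (μ : Fin 3 → ℝ) (c : ℝ) (hc : 0 < c)
    (η : Fin 3 → ℝ)
    (hη : η = ![μ 0 ^ 2 - c * μ 1 ^ 2 * μ 2 ^ 2,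
                μ 1 ^ 2 - c * μ 0 ^ 2 * μ 2 ^ 2,
                μ 2 ^ 2 - c * μ 0 ^ 2 * μ 1 ^ 2])
    (σ : Fin 3 → ℝ) (hσ : σ ≠ 0) :
    (∃ t : ℝ, ∀ i, η i * σ i = t * σ i) ↔
      (∃ t' : ℝ, ∀ i, μ i ^ 2 * σ i = t' * σ i) :=
  twisted_skyrmion_iff_harmonic_general μ c hc η hη σ
end

section
/- Let μ = (μ₁, μ₂, μ₃) ∈ ℝ³, let M(v) = (μ₁v₁, μ₂v₂, μ₃v₃), set ρ₁ = 2μ₂μ₃, ρ₂ = 2μ₁μ₃, ρ₃ = 2μ₁μ₂, and let σ ∈ ℝ³ with |σ| = 1 satisfy M(M(σ)) = |M(σ)|²·σ. Set ε₁ = μ₁² + μ₂² + μ₃² − |M(σ)|² and ε₂ = (1/4)(ρ₁²σ₁² + ρ₂²σ₂² + ρ₃²σ₃²), and define ν₂ : ℝ³ → ℝ³ by ν₂(v) = M⁴(v) − ε₁·M(M(v)) + ε₂·v + (ε₁ − |M(σ)|²)·⟨v, M(σ)⟩·M(σ). Then Σ_{i=1}^{3} μ_i · (e_i × ν₂(e_i))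 = (ε₁ − |M(σ)|²) · ( M(M(σ)) × M(σ) ). -/
/-! The terms `M⁴v − ε₁M²v + ε₂v` of `ν₂` form a diagonal map `D`, and `eᵢ × D eᵢ = 0`, so
they contribute nothing to `Σᵢ μᵢ(eᵢ × ν₂(eᵢ))`. Only the rank-one term `c⟨v, w⟩w` with `w = Mσ`
survives, and it contributes `c · (Σᵢ μᵢwᵢeᵢ) × w = c · (Mw × w)`. -/

open Matrix

section CrossProduct

variable {R : Type*} [CommRing R]

theorem single_one_cross_mul_single_one (d : Fin 3 → R) (i : Fin 3) :
    Pi.single i 1 ⨯₃ (d * Pi.single i 1) = 0 := by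
  have hdiag : d * Pi.single i 1 = d i • Pi.single i 1 := by
    ext j
    by_cases h : j = i <;> simp [h]
  rw [hdiag, map_smul, cross_self, smul_zero]

theorem sum_smul_single_one_cross_smul (μ a w : Fin 3 → R) :
    ∑ i, μ i • (Pi.single i 1 ⨯₃ (a i • w)) = (μ * a) ⨯₃ w := by
  conv_rhs => rw [pi_eq_sum_univ' (μ * a)]
  simp only [map_sum, map_smul, LinearMap.sum_apply, LinearMap.smul_apply, smul_smul, Pi.mul_apply]

end CrossProduct

theorem div_newton_two_general (μ σ : Fin 3 → ℝ)
    (ε₁ ε₂ : ℝ)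
    (ν₂ : (Fin 3 → ℝ) → (Fin 3 → ℝ))
    (hν₂ : ∀ v, ν₂ v =
      milnorMap μ (milnorMap μ (milnorMap μ (milnorMap μ v))) -
        ε₁ • milnorMap μ (milnorMap μ v) + ε₂ • v +
        ((ε₁ - milnorMap μ σ ⬝ᵥ milnorMap μ σ) * (v ⬝ᵥ milnorMap μ σ)) • milnorMap μ σ) :
    ∑ i : Fin 3, μ i • ((Pi.single i 1 : Fin 3 → ℝ) ⨯₃ ν₂ (Pi.single i 1)) =
      (ε₁ - milnorMap μ σ ⬝ᵥ milnorMap μ σ) •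
        (milnorMap μ (milnorMap μ σ) ⨯₃ milnorMap μ σ) := by
  set w := milnorMap μ σ
  set c := ε₁ - w ⬝ᵥ w
  set d : Fin 3 → ℝ := fun j => μ j ^ 4 - ε₁ * μ j ^ 2 + ε₂
  have hsplit : ∀ v, ν₂ v = d * v + (c * (v ⬝ᵥ w)) • w := by
    intro v
    ext j
    simp only [hν₂, milnorMap, d, Pi.add_apply, Pi.sub_apply, Pi.smul_apply, Pi.mul_apply,
      smul_eq_mul]
    ring
  have hcoeff : (fun i => c * (Pi.single i 1 ⬝ᵥ w)) = c • w := by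
    ext i
    simp
  simp only [hsplit, map_add, single_one_cross_mul_single_one, zero_add]
  rw [sum_smul_single_one_cross_smul μ (fun i => c * (Pi.single i 1 ⬝ᵥ w)) w, hcoeff,
    mul_smul_comm, map_smul, LinearMap.smul_apply, milnorMap_eq_mul μ w]

/-- For a harmonic unit vector field `σ` (i.e. `M²σ = |Mσ|²σ`), the divergence of the second
vertical Newton tensor `ν₂(v) = M⁴v − ε₁M²v + ε₂v + (ε₁ − |Mσ|²)⟨v, Mσ⟩Mσ` satisfies
`Σᵢ μᵢ(eᵢ × ν₂(eᵢ)) = (ε₁ − |Mσ|²)·(M²σ × Mσ)`, i.e. `div ν₂ = (ε₁ − |Mσ|²)·div ν₁`. -/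
theorem div_newton_two (μ σ : Fin 3 → ℝ) (hσ : σ ⬝ᵥ σ = 1)
    (hharm : milnorMap μ (milnorMap μ σ) = (milnorMap μ σ ⬝ᵥ milnorMap μ σ) • σ)
    (ρ : Fin 3 → ℝ) (hρ : ρ = ![2 * μ 1 * μ 2, 2 * μ 0 * μ 2, 2 * μ 0 * μ 1])
    (ε₁ ε₂ : ℝ)
    (hε₁ : ε₁ = μ 0 ^ 2 + μ 1 ^ 2 + μ 2 ^ 2 - milnorMap μ σ ⬝ᵥ milnorMap μ σ)
    (hε₂ : ε₂ = (1 / 4 : ℝ) *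
        (ρ 0 ^ 2 * σ 0 ^ 2 + ρ 1 ^ 2 * σ 1 ^ 2 + ρ 2 ^ 2 * σ 2 ^ 2))
    (ν₂ : (Fin 3 → ℝ) → (Fin 3 → ℝ))
    (hν₂ : ∀ v, ν₂ v =
      milnorMap μ (milnorMap μ (milnorMap μ (milnorMap μ v))) -
        ε₁ • milnorMap μ (milnorMap μ v) + ε₂ • v +
        ((ε₁ - milnorMap μ σ ⬝ᵥ milnorMap μ σ) * (v ⬝ᵥ milnorMap μ σ)) • milnorMap μ σ) :
    ∑ i : Fin 3, μ i • ((Pi.single i 1 : Fin 3 → ℝ) ⨯₃ ν₂ (Pi.single i 1)) =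
      (ε₁ - milnorMap μ σ ⬝ᵥ milnorMap μ σ) •
        (milnorMap μ (milnorMap μ σ) ⨯₃ milnorMap μ σ) :=
  div_newton_two_general μ σ ε₁ ε₂ ν₂ hν₂
end
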